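/- arXiv:2307.06438 — 2 statements merged into one kernel-verified Lean document; each statement's English description precedes it below -/
import Mathlib

section
/- Let Φ be the fundamental 4-form of the standard Spin(7)-structure on ℝ^8. Then for all indices i,j,k,l ∈ {0,…,7}: Φ_{ijpq}Φ_{klpq} = 6δ_{ik}δ_{jl} − 6δ_{il}δ_{jk} − 4Φ_{ijkl} (sum over p,q). -/
/-!
We work in ℝ⁸ with the standard basis `e₀, …, e₇`.  A `k`-form is a totally antisymmetric
map `(Fin 8)^k → ℝ`; repeated indices are summed over `Fin 8` and `kd` is the Kronecker
delta.  `Phi` is the fundamental 4-form of the standard `Spin(7)`-structure on ℝ⁸,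
`Φ = -e₀₁₂₇ + e₀₂₃₆ - e₀₃₄₇ - e₀₅₆₇ + e₀₁₄₆ + e₀₂₄₅ - e₀₁₃₅
     - e₃₄₅₆ - e₁₄₅₇ - e₁₂₅₆ - e₁₂₃₄ - e₂₃₅₇ - e₁₃₆₇ + e₂₄₆₇`.
-/

noncomputable section

/-- Kronecker delta on `Fin 8`. -/
def kd (a b : Fin 8) : ℝ := if a = b then 1 else 0

/-- Component at the indices `(i,j,k,l)` of the wedge product `e_a ∧ e_b ∧ e_c ∧ e_d`
of standard coordinate 1-forms, normalized so that `(e_a ∧ e_b ∧ e_c ∧ e_d)_{abcd} = 1`;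
it is the alternating sum of products of Kronecker deltas. -/
def wedge4 (a b c d i j k l : Fin 8) : ℝ :=
  Matrix.det !![kd a i, kd a j, kd a k, kd a l;
                kd b i, kd b j, kd b k, kd b l;
                kd c i, kd c j, kd c k, kd c l;
                kd d i, kd d j, kd d k, kd d l]

/-- The fundamental 4-form `Φ` of the standard `Spin(7)`-structure on `ℝ⁸`, in components:
the totally antisymmetric 4-tensor with `Φ_{0127} = -1`, `Φ_{0236} = 1`, `Φ_{0347} = -1`,
`Φ_{0567} = -1`, `Φ_{0146} = 1`, `Φ_{0245} = 1`, `Φ_{0135} = -1`, `Φ_{3456} = -1`,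
`Φ_{1457} = -1`, `Φ_{1256} = -1`, `Φ_{1234} = -1`, `Φ_{2357} = -1`, `Φ_{1367} = -1`,
`Φ_{2467} = 1`, all components not obtained from these by permutation being zero. -/
def Phi (i j k l : Fin 8) : ℝ :=
    -wedge4 0 1 2 7 i j k l + wedge4 0 2 3 6 i j k l - wedge4 0 3 4 7 i j k l
  - wedge4 0 5 6 7 i j k l + wedge4 0 1 4 6 i j k l + wedge4 0 2 4 5 i j k l
  - wedge4 0 1 3 5 i j k l - wedge4 3 4 5 6 i j k l - wedge4 1 4 5 7 i j k l
  - wedge4 1 2 5 6 i j k l - wedge4 1 2 3 4 i j k l - wedge4 2 3 5 7 i j k l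
  - wedge4 1 3 6 7 i j k l + wedge4 2 4 6 7 i j k l


def kdZ (a b : Fin 8) : ℤ := if a = b then 1 else 0

def wedge4Z (a b c d i j k l : Fin 8) : ℤ :=
  0
    + kdZ a i*kdZ b j*kdZ c k*kdZ d l
    - kdZ a i*kdZ b j*kdZ d k*kdZ c l
    - kdZ a i*kdZ c j*kdZ b k*kdZ d l
    + kdZ a i*kdZ c j*kdZ d k*kdZ b l
    + kdZ a i*kdZ d j*kdZ b k*kdZ c l
    - kdZ a i*kdZ d j*kdZ c k*kdZ b l
    - kdZ b i*kdZ a j*kdZ c k*kdZ d l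
    + kdZ b i*kdZ a j*kdZ d k*kdZ c l
    + kdZ b i*kdZ c j*kdZ a k*kdZ d l
    - kdZ b i*kdZ c j*kdZ d k*kdZ a l
    - kdZ b i*kdZ d j*kdZ a k*kdZ c l
    + kdZ b i*kdZ d j*kdZ c k*kdZ a l
    + kdZ c i*kdZ a j*kdZ b k*kdZ d l
    - kdZ c i*kdZ a j*kdZ d k*kdZ b l
    - kdZ c i*kdZ b j*kdZ a k*kdZ d l
    + kdZ c i*kdZ b j*kdZ d k*kdZ a l
    + kdZ c i*kdZ d j*kdZ a k*kdZ b l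
    - kdZ c i*kdZ d j*kdZ b k*kdZ a l
    - kdZ d i*kdZ a j*kdZ b k*kdZ c l
    + kdZ d i*kdZ a j*kdZ c k*kdZ b l
    + kdZ d i*kdZ b j*kdZ a k*kdZ c l
    - kdZ d i*kdZ b j*kdZ c k*kdZ a l
    - kdZ d i*kdZ c j*kdZ a k*kdZ b l
    + kdZ d i*kdZ c j*kdZ b k*kdZ a l

def PhiZ (i j k l : Fin 8) : ℤ :=
    -wedge4Z 0 1 2 7 i j k l + wedge4Z 0 2 3 6 i j k l - wedge4Z 0 3 4 7 i j k l
  - wedge4Z 0 5 6 7 i j k l + wedge4Z 0 1 4 6 i j k l + wedge4Z 0 2 4 5 i j k l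
  - wedge4Z 0 1 3 5 i j k l - wedge4Z 3 4 5 6 i j k l - wedge4Z 1 4 5 7 i j k l
  - wedge4Z 1 2 5 6 i j k l - wedge4Z 1 2 3 4 i j k l - wedge4Z 2 3 5 7 i j k l
  - wedge4Z 1 3 6 7 i j k l + wedge4Z 2 4 6 7 i j k l

def Pmask : Nat := 52728170121138567682570154861883689442426595270600175793392716033607458264413605848424618890095026859243702221903315728813554851565023824871858512216568882775902473225573312648192464790778076262974146031732001896639312485328169731232863390283832457943367960571642984067392013361230913788667769630142979779132987152588182760176750450767466707158171446244346662376837220513247514136906008838504674294687602382122148547664104355268158623030884230697099331645227783782822031451286535012430624670475960242901434402377520447646634649373948807214340516513128043460332556163105676400823845971034690640240262472656484952146826480381865334343280075675631959527913245650214304813683277128697131795326521274682004294522528919470542769570491722552761008550491711717176226475423321949691880424637118585470023778813737365332307228716507754223069867932048766378585125501345002327845535080029204965083691251268015751152032347718533080545330192090827448632560890386947403904574994776355778318740767040531665725645232531079797270126848187029408938015567682970252835578538180582070581913116646751971206165648330131767502850194051076980759692136777834103930996741876345771568213388508850808938316457871179774242775420024913920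

def Nmask : Nat := 3374708682149726106585521843023550490222162297354491845462198076158415949995187049818471192367196433793027476275924765376208040205613378807658507940538660671421296355455121082832135756563604373774127686594327505952456133762424022131042518835648613226212934164741878186465481182079285024180955500219760059798529129447861876191480731440882426205408915779462381718751788988073274172393539156893150896550499627578548438894471462395961264782836115361961230151667614316426147022028259945624666526440170606847644797120210209790779364121403598904940918473454535698715696612808517954234624385429422493437100506837853752169010156915197467934245786424708563690445467441407445825321727920660168725640612352585711761449919096549925935942555071597058312274720224954101939163739930267679364103800039212355456861122701070060282656960599516955268398186761644127508644114203179567968581409824118841737831006036243325212290255585728102071892711679319257973994424042914522612251146127857419682732148300685237050156993305757085495599777394738899227858330569595668235578562968637612928401870542053302996069283463518466781522974671144133002471655967806955325894576817121580158009019832639210985762123236753119435159989674489937920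

def PhiFun (i j k l : Fin 8) : ℤ :=
  (if Nat.testBit Pmask (i.val * 512 + j.val * 64 + k.val * 8 + l.val) then 1 else 0) -
  (if Nat.testBit Nmask (i.val * 512 + j.val * 64 + k.val * 8 + l.val) then 1 else 0)

lemma kd_cast (a b : Fin 8) : kd a b = ((kdZ a b : ℤ) : ℝ) := by
  simp [kd, kdZ, apply_ite (fun z : ℤ => (z : ℝ))]

lemma wedge4_cast (a b c d i j k l : Fin 8) :
    wedge4 a b c d i j k l = ((wedge4Z a b c d i j k l : ℤ) : ℝ) := by
  simp only [wedge4, wedge4Z, kd_cast]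
  simp [Matrix.det_succ_row_zero, Fin.sum_univ_succ, Fin.succAbove, Fin.ext_iff,
    Fin.castSucc, Fin.castAdd, Fin.castLE]
  ring

lemma Phi_cast (i j k l : Fin 8) : Phi i j k l = ((PhiZ i j k l : ℤ) : ℝ) := by
  simp only [Phi, PhiZ, wedge4_cast]
  push_cast
  ring

/-- Generic sorting lemma: a function antisymmetric under the three adjacent
transpositions which vanishes on strictly sorted tuples vanishes everywhere. -/
lemma sorted_zero3 (f : Fin 8 → Fin 8 → Fin 8 → Fin 8 → ℤ)
    (a12 : ∀ i j k l, f j i k l = -f i j k l)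
    (a23 : ∀ i j k l, f i k j l = -f i j k l)
    (a34 : ∀ i j k l, f i j l k = -f i j k l)
    (hs : ∀ i j k l, i < j → j < k → k < l → f i j k l = 0) :
    ∀ i j k l, f i j k l = 0 := by
  have d12 : ∀ i k l, f i i k l = 0 := fun i k l => by have := a12 i i k l; linarith
  have d23 : ∀ i j l, f i j j l = 0 := fun i j l => by have := a23 i j j l; linarith
  have d34 : ∀ i j k, f i j k k = 0 := fun i j k => by have := a34 i j k k; linarith
  have d13 : ∀ i j l, f i j i l = 0 := fun i j l => by
    have h1 := a23 i i j l; have h2 := d12 i j l; linarith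
  have d14 : ∀ i j k, f i j k i = 0 := fun i j k => by
    have h1 := a34 i j i k; have h2 := d13 i j k; linarith
  have d24 : ∀ i j k, f i j k j = 0 := fun i j k => by
    have h1 := a34 i j j k; have h2 := d23 i j k; linarith
  have sort3 : ∀ i j k l, i < j → j < k → f i j k l = 0 := by
    intro i j k l h1 h2
    rcases lt_trichotomy k l with h | rfl | h
    · exact hs i j k l h1 h2 h
    · exact d34 i j k
    · have e1 := a34 i j l k
      rcases lt_trichotomy j l with h' | rfl | h'
      · have := hs i j l k h1 h' h; linarith
      · exact d24 i j k
      · rcases lt_trichotomy i l with h'' | rfl | h''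
        · have e2 := a23 i l j k
          have := hs i l j k h'' h' h2; linarith
        · exact d14 i j k
        · have e2 := a23 i l j k
          have e3 := a12 l i j k
          have := hs l i j k h'' h1 h2; linarith
  have sort2 : ∀ i j k l, i < j → f i j k l = 0 := by
    intro i j k l h1
    rcases lt_trichotomy j k with h | rfl | h
    · exact sort3 i j k l h1 h
    · exact d23 i j l
    · have e1 := a23 i k j l
      rcases lt_trichotomy i k with h' | rfl | h'
      · have := sort3 i k j l h' h; linarith
      · exact d13 i j l
      · have e2 := a12 k i j l
        have := sort3 k i j l h' h1; linarith
  intro i j k l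
  rcases lt_trichotomy i j with h | rfl | h
  · exact sort2 i j k l h
  · exact d12 i k l
  · have e1 := a12 j i k l
    have := sort2 j i k l h; linarith

/-- Generic sorting lemma for functions antisymmetric in the first pair and the
last pair separately. -/
lemma sorted_zero2 (f : Fin 8 → Fin 8 → Fin 8 → Fin 8 → ℤ)
    (a12 : ∀ i j k l, f j i k l = -f i j k l)
    (a34 : ∀ i j k l, f i j l k = -f i j k l)
    (hs : ∀ i j k l, i < j → k < l → f i j k l = 0) :
    ∀ i j k l, f i j k l = 0 := by
  have d12 : ∀ i k l, f i i k l = 0 := fun i k l => by have := a12 i i k l; linarith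
  have d34 : ∀ i j k, f i j k k = 0 := fun i j k => by have := a34 i j k k; linarith
  have colfix : ∀ i j k l, i < j → f i j k l = 0 := by
    intro i j k l h1
    rcases lt_trichotomy k l with h | rfl | h
    · exact hs i j k l h1 h
    · exact d34 i j k
    · have e1 := a34 i j l k
      have := hs i j l k h1 h; linarith
  intro i j k l
  rcases lt_trichotomy i j with h | rfl | h
  · exact colfix i j k l h
  · exact d12 i k l
  · have e1 := a12 j i k l
    have := colfix j i k l h; linarith

lemma zs1 (i j k l : Fin 8) : PhiZ j i k l = -PhiZ i j k l := by
  simp only [PhiZ, wedge4Z]; ring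

lemma zs2 (i j k l : Fin 8) : PhiZ i k j l = -PhiZ i j k l := by
  simp only [PhiZ, wedge4Z]; ring

lemma zs3 (i j k l : Fin 8) : PhiZ i j l k = -PhiZ i j k l := by
  simp only [PhiZ, wedge4Z]; ring

set_option maxHeartbeats 2000000 in
lemma fs1 : ∀ i j k l : Fin 8, PhiFun j i k l = -PhiFun i j k l := by decide

set_option maxHeartbeats 2000000 in
lemma fs2 : ∀ i j k l : Fin 8, PhiFun i k j l = -PhiFun i j k l := by decide

set_option maxHeartbeats 2000000 in
lemma fs3 : ∀ i j k l : Fin 8, PhiFun i j l k = -PhiFun i j k l := by decide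

set_option maxHeartbeats 4000000 in
lemma sortedZ : ∀ i j k l : Fin 8, i < j → j < k → k < l →
    PhiZ i j k l = PhiFun i j k l := by decide

lemma PhiZ_eq (i j k l : Fin 8) : PhiZ i j k l = PhiFun i j k l := by
  have h := sorted_zero3 (fun i j k l => PhiZ i j k l - PhiFun i j k l)
    (fun i j k l => by rw [zs1 i j k l, fs1 i j k l]; ring)
    (fun i j k l => by rw [zs2 i j k l, fs2 i j k l]; ring)
    (fun i j k l => by rw [zs3 i j k l, fs3 i j k l]; ring)
    (fun i j k l h1 h2 h3 => by rw [sortedZ i j k l h1 h2 h3]; ring)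
    i j k l
  linarith

lemma Phi_eq (i j k l : Fin 8) : Phi i j k l = ((PhiFun i j k l : ℤ) : ℝ) := by
  rw [Phi_cast, PhiZ_eq]

set_option maxHeartbeats 8000000 in
lemma hG0 : ∀ i j k l : Fin 8, i < j → k < l →
    (∑ p, ∑ q, PhiFun i j p q * PhiFun k l p q) =
      6 * kdZ i k * kdZ j l - 6 * kdZ i l * kdZ j k - 4 * PhiFun i j k l := by decide

lemma sumswap1 (i j k l : Fin 8) :
    (∑ p, ∑ q, PhiFun j i p q * PhiFun k l p q) =
      -(∑ p, ∑ q, PhiFun i j p q * PhiFun k l p q) := by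
  rw [← Finset.sum_neg_distrib]
  refine Finset.sum_congr rfl fun p _ => ?_
  rw [← Finset.sum_neg_distrib]
  refine Finset.sum_congr rfl fun q _ => ?_
  rw [fs1 i j p q]; ring

lemma sumswap2 (i j k l : Fin 8) :
    (∑ p, ∑ q, PhiFun i j p q * PhiFun l k p q) =
      -(∑ p, ∑ q, PhiFun i j p q * PhiFun k l p q) := by
  rw [← Finset.sum_neg_distrib]
  refine Finset.sum_congr rfl fun p _ => ?_
  rw [← Finset.sum_neg_distrib]
  refine Finset.sum_congr rfl fun q _ => ?_
  rw [fs1 k l p q]; ring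

lemma h2 (i j k l : Fin 8) :
    (∑ p, ∑ q, PhiFun i j p q * PhiFun k l p q) =
      6 * kdZ i k * kdZ j l - 6 * kdZ i l * kdZ j k - 4 * PhiFun i j k l := by
  have h := sorted_zero2 (fun i j k l =>
      (∑ p, ∑ q, PhiFun i j p q * PhiFun k l p q) -
        (6 * kdZ i k * kdZ j l - 6 * kdZ i l * kdZ j k - 4 * PhiFun i j k l))
    (fun i j k l => by
      rw [sumswap1 i j k l, fs1 i j k l]
      have c1 : kdZ j k * kdZ i l = kdZ i l * kdZ j k := mul_comm _ _
      have c2 : kdZ j l * kdZ i k = kdZ i k * kdZ j l := mul_comm _ _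
      linarith [c1, c2])
    (fun i j k l => by
      rw [sumswap2 i j k l, fs3 i j k l]
      have c1 : kdZ i l * kdZ j k = kdZ i l * kdZ j k := rfl
      ring)
    (fun i j k l h1 h2 => by
      rw [hG0 i j k l h1 h2]
      ring)
    i j k l
  linarith

/-- `Φ_{ijpq}Φ_{klpq} = 6δ_{ik}δ_{jl} - 6δ_{il}δ_{jk} - 4Φ_{ijkl}`. -/
theorem spin7_two_index_contraction :
    ∀ i j k l : Fin 8,
      (∑ p, ∑ q, Phi i j p q * Phi k l p q) =
        6 * kd i k * kd j l - 6 * kd i l * kd j k - 4 * Phi i j k l := by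
  intro i j k l
  have e := h2 i j k l
  have e' : ((∑ p, ∑ q, PhiFun i j p q * PhiFun k l p q : ℤ) : ℝ) =
      ((6 * kdZ i k * kdZ j l - 6 * kdZ i l * kdZ j k - 4 * PhiFun i j k l : ℤ) : ℝ) :=
    congrArg (fun z : ℤ => (z : ℝ)) e
  push_cast at e'
  simp only [Phi_eq, kd_cast]
  convert e' using 2 <;> push_cast <;> ring
end
end

section
/- Suppose a 3-form T and a 1-form θ on ℝ^8 satisfy the structure equation T_{klm} = (1/2) T_{jsk}Φ_{jslm} − (1/2) T_{jsl}Φ_{jskm} + (1/2) T_{jsm}Φ_{jskl} + (7/6) θ_sΦ_{sklm} for all k,l,m (sums over j,s). Then θ is recovered from T by θ_i = −(1/7) T_{jkl}Φ_{jkli} for all i. -/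
/-!
We work in ℝ⁸ with the standard basis `e₀, …, e₇`.  A `k`-form is a totally antisymmetric
map `(Fin 8)^k → ℝ`; repeated indices are summed over `Fin 8` and `kd` is the Kronecker
delta.  `Phi` is the fundamental 4-form of the standard `Spin(7)`-structure on ℝ⁸,
`Φ = -e₀₁₂₇ + e₀₂₃₆ - e₀₃₄₇ - e₀₅₆₇ + e₀₁₄₆ + e₀₂₄₅ - e₀₁₃₅
     - e₃₄₅₆ - e₁₄₅₇ - e₁₂₅₆ - e₁₂₃₄ - e₂₃₅₇ - e₁₃₆₇ + e₂₄₆₇`.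
-/


set_option maxRecDepth 8000
set_option maxHeartbeats 2000000

noncomputable section

lemma det4 (M : Matrix (Fin 4) (Fin 4) ℝ) : M.det =
    M 0 0 * (M 1 1 * (M 2 2 * M 3 3 - M 2 3 * M 3 2) - M 1 2 * (M 2 1 * M 3 3 - M 2 3 * M 3 1) + M 1 3 * (M 2 1 * M 3 2 - M 2 2 * M 3 1))
  - M 0 1 * (M 1 0 * (M 2 2 * M 3 3 - M 2 3 * M 3 2) - M 1 2 * (M 2 0 * M 3 3 - M 2 3 * M 3 0) + M 1 3 * (M 2 0 * M 3 2 - M 2 2 * M 3 0))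
  + M 0 2 * (M 1 0 * (M 2 1 * M 3 3 - M 2 3 * M 3 1) - M 1 1 * (M 2 0 * M 3 3 - M 2 3 * M 3 0) + M 1 3 * (M 2 0 * M 3 1 - M 2 1 * M 3 0))
  - M 0 3 * (M 1 0 * (M 2 1 * M 3 2 - M 2 2 * M 3 1) - M 1 1 * (M 2 0 * M 3 2 - M 2 2 * M 3 0) + M 1 2 * (M 2 0 * M 3 1 - M 2 1 * M 3 0)) := by
  rw [Matrix.det_succ_row_zero]
  simp [Fin.sum_univ_succ, Matrix.det_fin_three, Matrix.submatrix, Fin.succAbove,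
    show ((2:Fin 3).succ : Fin 4) = 3 from rfl, show ((1:Fin 3).succ : Fin 4) = 2 from rfl,
    show ((0:Fin 3).succ : Fin 4) = 1 from rfl,
    show (Fin.castSucc (2:Fin 3) : Fin 4) = 2 from rfl,
    show (Fin.castSucc (1:Fin 3) : Fin 4) = 1 from rfl,
    show (Fin.castSucc (0:Fin 3) : Fin 4) = 0 from rfl,
    show (1:Fin 4) < Fin.succ 2 from by decide]
  ring

lemma wedge4_expand (a b c d i j k l : Fin 8) : wedge4 a b c d i j k l =
    kd a i * (kd b j * (kd c k * kd d l - kd c l * kd d k) - kd b k * (kd c j * kd d l - kd c l * kd d j) + kd b l * (kd c j * kd d k - kd c k * kd d j))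
  - kd a j * (kd b i * (kd c k * kd d l - kd c l * kd d k) - kd b k * (kd c i * kd d l - kd c l * kd d i) + kd b l * (kd c i * kd d k - kd c k * kd d i))
  + kd a k * (kd b i * (kd c j * kd d l - kd c l * kd d j) - kd b j * (kd c i * kd d l - kd c l * kd d i) + kd b l * (kd c i * kd d j - kd c j * kd d i))
  - kd a l * (kd b i * (kd c j * kd d k - kd c k * kd d j) - kd b j * (kd c i * kd d k - kd c k * kd d i) + kd b k * (kd c i * kd d j - kd c j * kd d i)) := by
  rw [wedge4, det4]
  simp [Matrix.cons_val_zero, Matrix.cons_val_one, Matrix.head_cons]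

lemma wedge4_swap12 (a b c d x y l m : Fin 8) : wedge4 a b c d x y l m = -wedge4 a b c d y x l m := by
  simp only [wedge4_expand]; ring

lemma wedge4_swap13 (a b c d x k y i : Fin 8) : wedge4 a b c d x k y i = -wedge4 a b c d y k x i := by
  simp only [wedge4_expand]; ring

lemma key (g : Fin 8 → ℝ) (x : Fin 8) : (∑ s, g s * kd x s) = g x := by
  simp [kd, mul_ite, Finset.sum_ite_eq]

lemma contract1 (f : Fin 8 → ℝ) (a b c d k l m : Fin 8) :
    (∑ s, f s * wedge4 a b c d s k l m) = f a * kd b k * kd c l * kd d m - f a * kd b k * kd d l * kd c m - f a * kd c k * kd b l * kd d m + f a * kd c k * kd d l * kd b m + f a * kd d k * kd b l * kd c m - f a * kd d k * kd c l * kd b m - f b * kd a k * kd c l * kd d m + f b * kd a k * kd d l * kd c m + f b * kd c k * kd a l * kd d m - f b * kd c k * kd d l * kd a m - f b * kd d k * kd a l * kd c m + f b * kd d k * kd c l * kd a m + f c * kd a k * kd b l * kd d m - f c * kd a k * kd d l * kd b m - f c * kd b k * kd a l * kd d m + f c * kd b k * kd d l * kd a m + f c * kd d k * kd a l * kd b m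 - f c * kd d k * kd b l * kd a m - f d * kd a k * kd b l * kd c m + f d * kd a k * kd c l * kd b m + f d * kd b k * kd a l * kd c m - f d * kd b k * kd c l * kd a m - f d * kd c k * kd a l * kd b m + f d * kd c k * kd b l * kd a m := by
  have e : ∀ s, f s * wedge4 a b c d s k l m =
      (f s * kd a s) * (kd b k * (kd c l * kd d m - kd c m * kd d l) - kd b l * (kd c k * kd d m - kd c m * kd d k) + kd b m * (kd c k * kd d l - kd c l * kd d k))
    - (f s * kd b s) * (kd a k * (kd c l * kd d m - kd c m * kd d l) - kd a l * (kd c k * kd d m - kd c m * kd d k) + kd a m * (kd c k * kd d l - kd c l * kd d k))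
    + (f s * kd c s) * (kd a k * (kd b l * kd d m - kd b m * kd d l) - kd a l * (kd b k * kd d m - kd b m * kd d k) + kd a m * (kd b k * kd d l - kd b l * kd d k))
    - (f s * kd d s) * (kd a k * (kd b l * kd c m - kd b m * kd c l) - kd a l * (kd b k * kd c m - kd b m * kd c k) + kd a m * (kd b k * kd c l - kd b l * kd c k)) := by
    intro s; rw [wedge4_expand]; ring
  rw [Finset.sum_congr rfl (fun s _ => e s)]
  simp only [Finset.sum_add_distrib, Finset.sum_sub_distrib, ← Finset.sum_mul, key]
  ring

lemma contract2 (f : Fin 8 → Fin 8 → ℝ) (a b c d l m : Fin 8) :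
    (∑ j, ∑ s, f j s * wedge4 a b c d j s l m) = f a b * kd c l * kd d m - f a b * kd d l * kd c m - f a c * kd b l * kd d m + f a c * kd d l * kd b m + f a d * kd b l * kd c m - f a d * kd c l * kd b m - f b a * kd c l * kd d m + f b a * kd d l * kd c m + f b c * kd a l * kd d m - f b c * kd d l * kd a m - f b d * kd a l * kd c m + f b d * kd c l * kd a m + f c a * kd b l * kd d m - f c a * kd d l * kd b m - f c b * kd a l * kd d m + f c b * kd d l * kd a m + f c d * kd a l * kd b m - f c d * kd b l * kd a m - f d a * kd b l * kd c m + f d a * kd c l * kd b m + f d b * kd a l * kd c m - f d b * kd c l * kd a m - f d c * kd a l * kd b m + f d c * kd b l * kd a m := by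
  have e : ∀ j, (∑ s, f j s * wedge4 a b c d j s l m) = -(∑ s, f j s * wedge4 a b c d s j l m) := by
    intro j
    rw [← Finset.sum_neg_distrib]
    exact Finset.sum_congr rfl fun s _ => by rw [wedge4_swap12 a b c d j s l m]; ring
  rw [Finset.sum_congr rfl (fun j _ => e j)]
  simp only [contract1, Finset.sum_neg_distrib, neg_add, neg_sub, neg_neg,
    Finset.sum_add_distrib, Finset.sum_sub_distrib, ← Finset.sum_mul, key]
  ring

lemma contract3 (f : Fin 8 → Fin 8 → Fin 8 → ℝ) (a b c d i : Fin 8) :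
    (∑ j, ∑ k, ∑ l, f j k l * wedge4 a b c d j k l i) = f a b c * kd d i - f a b d * kd c i - f a c b * kd d i + f a c d * kd b i + f a d b * kd c i - f a d c * kd b i - f b a c * kd d i + f b a d * kd c i + f b c a * kd d i - f b c d * kd a i - f b d a * kd c i + f b d c * kd a i + f c a b * kd d i - f c a d * kd b i - f c b a * kd d i + f c b d * kd a i + f c d a * kd b i - f c d b * kd a i - f d a b * kd c i + f d a c * kd b i + f d b a * kd c i - f d b c * kd a i - f d c a * kd b i + f d c b * kd a i := by
  have e : ∀ j k, (∑ l, f j k l * wedge4 a b c d j k l i) = -(∑ l, f j k l * wedge4 a b c d l k j i) := by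
    intro j k
    rw [← Finset.sum_neg_distrib]
    exact Finset.sum_congr rfl fun l _ => by rw [wedge4_swap13 a b c d j k l i]; ring
  rw [Finset.sum_congr rfl (fun j _ => Finset.sum_congr rfl (fun k _ => e j k))]
  simp only [contract1, Finset.sum_neg_distrib, neg_add, neg_sub, neg_neg,
    Finset.sum_add_distrib, Finset.sum_sub_distrib, ← Finset.sum_mul, key]
  ring

lemma phiC1 (f : Fin 8 → ℝ) (k l m : Fin 8) :
    (∑ s, f s * Phi s k l m) = -f 0 * kd 1 k * kd 2 l * kd 7 m + f 0 * kd 1 k * kd 7 l * kd 2 m + f 0 * kd 2 k * kd 1 l * kd 7 m - f 0 * kd 2 k * kd 7 l * kd 1 m - f 0 * kd 7 k * kd 1 l * kd 2 m + f 0 * kd 7 k * kd 2 l * kd 1 m + f 1 * kd 0 k * kd 2 l * kd 7 m - f 1 * kd 0 k * kd 7 l * kd 2 m - f 1 * kd 2 k * kd 0 l * kd 7 m + f 1 * kd 2 k * kd 7 l * kd 0 m + f 1 * kd 7 k * kd 0 l * kd 2 m - f 1 * kd 7 k * kd 2 l * kd 0 m - f 2 * kd 0 k * kd 1 l * kd 7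 m + f 2 * kd 0 k * kd 7 l * kd 1 m + f 2 * kd 1 k * kd 0 l * kd 7 m - f 2 * kd 1 k * kd 7 l * kd 0 m - f 2 * kd 7 k * kd 0 l * kd 1 m + f 2 * kd 7 k * kd 1 l * kd 0 m + f 7 * kd 0 k * kd 1 l * kd 2 m - f 7 * kd 0 k * kd 2 l * kd 1 m - f 7 * kd 1 k * kd 0 l * kd 2 m + f 7 * kd 1 k * kd 2 l * kd 0 m + f 7 * kd 2 k * kd 0 l * kd 1 m - f 7 * kd 2 k * kd 1 l * kd 0 m + f 0 * kd 2 k * kd 3 l * kd 6 m - f 0 * kd 2 k * kd 6 l * kd 3 m - f 0 * kd 3 k * kd 2 l * kd 6 m + f 0 * kd 3 k * kd 6 l * kd 2 m + f 0 * kd 6 k * kd 2 l * kd 3 m - f 0 * kd 6 k * kd 3 l * kd 2 m - f 2 * kd 0 k * kd 3 l * kd 6 m + f 2 * kd 0 k * kd 6 l * kd 3 m + f 2 * kd 3 k * kd 0 l * kd 6 m - f 2 * kd 3 k * kd 6 l * kd 0 m - f 2 * kd 6 k * kd 0 l * kd 3 m + f 2 * kd 6 k * kd 3 l * kd 0 m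 + f 3 * kd 0 k * kd 2 l * kd 6 m - f 3 * kd 0 k * kd 6 l * kd 2 m - f 3 * kd 2 k * kd 0 l * kd 6 m + f 3 * kd 2 k * kd 6 l * kd 0 m + f 3 * kd 6 k * kd 0 l * kd 2 m - f 3 * kd 6 k * kd 2 l * kd 0 m - f 6 * kd 0 k * kd 2 l * kd 3 m + f 6 * kd 0 k * kd 3 l * kd 2 m + f 6 * kd 2 k * kd 0 l * kd 3 m - f 6 * kd 2 k * kd 3 l * kd 0 m - f 6 * kd 3 k * kd 0 l * kd 2 m + f 6 * kd 3 k * kd 2 l * kd 0 m - f 0 * kd 3 k * kd 4 l * kd 7 m + f 0 * kd 3 k * kd 7 l * kd 4 m + f 0 * kd 4 k * kd 3 l * kd 7 m - f 0 * kd 4 k * kd 7 l * kd 3 m - f 0 * kd 7 k * kd 3 l * kd 4 m + f 0 * kd 7 k * kd 4 l * kd 3 m + f 3 * kd 0 k * kd 4 l * kd 7 m - f 3 * kd 0 k * kd 7 l * kd 4 m - f 3 * kd 4 k * kd 0 l * kd 7 m + f 3 * kd 4 k * kd 7 l * kd 0 m + f 3 * kd 7 k * kd 0 l * kd 4 m -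 f 3 * kd 7 k * kd 4 l * kd 0 m - f 4 * kd 0 k * kd 3 l * kd 7 m + f 4 * kd 0 k * kd 7 l * kd 3 m + f 4 * kd 3 k * kd 0 l * kd 7 m - f 4 * kd 3 k * kd 7 l * kd 0 m - f 4 * kd 7 k * kd 0 l * kd 3 m + f 4 * kd 7 k * kd 3 l * kd 0 m + f 7 * kd 0 k * kd 3 l * kd 4 m - f 7 * kd 0 k * kd 4 l * kd 3 m - f 7 * kd 3 k * kd 0 l * kd 4 m + f 7 * kd 3 k * kd 4 l * kd 0 m + f 7 * kd 4 k * kd 0 l * kd 3 m - f 7 * kd 4 k * kd 3 l * kd 0 m - f 0 * kd 5 k * kd 6 l * kd 7 m + f 0 * kd 5 k * kd 7 l * kd 6 m + f 0 * kd 6 k * kd 5 l * kd 7 m - f 0 * kd 6 k * kd 7 l * kd 5 m - f 0 * kd 7 k * kd 5 l * kd 6 m + f 0 * kd 7 k * kd 6 l * kd 5 m + f 5 * kd 0 k * kd 6 l * kd 7 m - f 5 * kd 0 k * kd 7 l * kd 6 m - f 5 * kd 6 k * kd 0 l * kd 7 m + f 5 * kd 6 k * kd 7 l * kd 0 m + f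 5 * kd 7 k * kd 0 l * kd 6 m - f 5 * kd 7 k * kd 6 l * kd 0 m - f 6 * kd 0 k * kd 5 l * kd 7 m + f 6 * kd 0 k * kd 7 l * kd 5 m + f 6 * kd 5 k * kd 0 l * kd 7 m - f 6 * kd 5 k * kd 7 l * kd 0 m - f 6 * kd 7 k * kd 0 l * kd 5 m + f 6 * kd 7 k * kd 5 l * kd 0 m + f 7 * kd 0 k * kd 5 l * kd 6 m - f 7 * kd 0 k * kd 6 l * kd 5 m - f 7 * kd 5 k * kd 0 l * kd 6 m + f 7 * kd 5 k * kd 6 l * kd 0 m + f 7 * kd 6 k * kd 0 l * kd 5 m - f 7 * kd 6 k * kd 5 l * kd 0 m + f 0 * kd 1 k * kd 4 l * kd 6 m - f 0 * kd 1 k * kd 6 l * kd 4 m - f 0 * kd 4 k * kd 1 l * kd 6 m + f 0 * kd 4 k * kd 6 l * kd 1 m + f 0 * kd 6 k * kd 1 l * kd 4 m - f 0 * kd 6 k * kd 4 l * kd 1 m - f 1 * kd 0 k * kd 4 l * kd 6 m + f 1 * kd 0 k * kd 6 l * kd 4 m + f 1 * kd 4 k * kd 0 l * kd 6 m - f 1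 * kd 4 k * kd 6 l * kd 0 m - f 1 * kd 6 k * kd 0 l * kd 4 m + f 1 * kd 6 k * kd 4 l * kd 0 m + f 4 * kd 0 k * kd 1 l * kd 6 m - f 4 * kd 0 k * kd 6 l * kd 1 m - f 4 * kd 1 k * kd 0 l * kd 6 m + f 4 * kd 1 k * kd 6 l * kd 0 m + f 4 * kd 6 k * kd 0 l * kd 1 m - f 4 * kd 6 k * kd 1 l * kd 0 m - f 6 * kd 0 k * kd 1 l * kd 4 m + f 6 * kd 0 k * kd 4 l * kd 1 m + f 6 * kd 1 k * kd 0 l * kd 4 m - f 6 * kd 1 k * kd 4 l * kd 0 m - f 6 * kd 4 k * kd 0 l * kd 1 m + f 6 * kd 4 k * kd 1 l * kd 0 m + f 0 * kd 2 k * kd 4 l * kd 5 m - f 0 * kd 2 k * kd 5 l * kd 4 m - f 0 * kd 4 k * kd 2 l * kd 5 m + f 0 * kd 4 k * kd 5 l * kd 2 m + f 0 * kd 5 k * kd 2 l * kd 4 m - f 0 * kd 5 k * kd 4 l * kd 2 m - f 2 * kd 0 k * kd 4 l * kd 5 m + f 2 * kd 0 k * kd 5 l * kd 4 m + f 2 *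 kd 4 k * kd 0 l * kd 5 m - f 2 * kd 4 k * kd 5 l * kd 0 m - f 2 * kd 5 k * kd 0 l * kd 4 m + f 2 * kd 5 k * kd 4 l * kd 0 m + f 4 * kd 0 k * kd 2 l * kd 5 m - f 4 * kd 0 k * kd 5 l * kd 2 m - f 4 * kd 2 k * kd 0 l * kd 5 m + f 4 * kd 2 k * kd 5 l * kd 0 m + f 4 * kd 5 k * kd 0 l * kd 2 m - f 4 * kd 5 k * kd 2 l * kd 0 m - f 5 * kd 0 k * kd 2 l * kd 4 m + f 5 * kd 0 k * kd 4 l * kd 2 m + f 5 * kd 2 k * kd 0 l * kd 4 m - f 5 * kd 2 k * kd 4 l * kd 0 m - f 5 * kd 4 k * kd 0 l * kd 2 m + f 5 * kd 4 k * kd 2 l * kd 0 m - f 0 * kd 1 k * kd 3 l * kd 5 m + f 0 * kd 1 k * kd 5 l * kd 3 m + f 0 * kd 3 k * kd 1 l * kd 5 m - f 0 * kd 3 k * kd 5 l * kd 1 m - f 0 * kd 5 k * kd 1 l * kd 3 m + f 0 * kd 5 k * kd 3 l * kd 1 m + f 1 * kd 0 k * kd 3 l * kd 5 m - f 1 * kd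 0 k * kd 5 l * kd 3 m - f 1 * kd 3 k * kd 0 l * kd 5 m + f 1 * kd 3 k * kd 5 l * kd 0 m + f 1 * kd 5 k * kd 0 l * kd 3 m - f 1 * kd 5 k * kd 3 l * kd 0 m - f 3 * kd 0 k * kd 1 l * kd 5 m + f 3 * kd 0 k * kd 5 l * kd 1 m + f 3 * kd 1 k * kd 0 l * kd 5 m - f 3 * kd 1 k * kd 5 l * kd 0 m - f 3 * kd 5 k * kd 0 l * kd 1 m + f 3 * kd 5 k * kd 1 l * kd 0 m + f 5 * kd 0 k * kd 1 l * kd 3 m - f 5 * kd 0 k * kd 3 l * kd 1 m - f 5 * kd 1 k * kd 0 l * kd 3 m + f 5 * kd 1 k * kd 3 l * kd 0 m + f 5 * kd 3 k * kd 0 l * kd 1 m - f 5 * kd 3 k * kd 1 l * kd 0 m - f 3 * kd 4 k * kd 5 l * kd 6 m + f 3 * kd 4 k * kd 6 l * kd 5 m + f 3 * kd 5 k * kd 4 l * kd 6 m - f 3 * kd 5 k * kd 6 l * kd 4 m - f 3 * kd 6 k * kd 4 l * kd 5 m + f 3 * kd 6 k * kd 5 l * kd 4 m + f 4 * kd 3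 k * kd 5 l * kd 6 m - f 4 * kd 3 k * kd 6 l * kd 5 m - f 4 * kd 5 k * kd 3 l * kd 6 m + f 4 * kd 5 k * kd 6 l * kd 3 m + f 4 * kd 6 k * kd 3 l * kd 5 m - f 4 * kd 6 k * kd 5 l * kd 3 m - f 5 * kd 3 k * kd 4 l * kd 6 m + f 5 * kd 3 k * kd 6 l * kd 4 m + f 5 * kd 4 k * kd 3 l * kd 6 m - f 5 * kd 4 k * kd 6 l * kd 3 m - f 5 * kd 6 k * kd 3 l * kd 4 m + f 5 * kd 6 k * kd 4 l * kd 3 m + f 6 * kd 3 k * kd 4 l * kd 5 m - f 6 * kd 3 k * kd 5 l * kd 4 m - f 6 * kd 4 k * kd 3 l * kd 5 m + f 6 * kd 4 k * kd 5 l * kd 3 m + f 6 * kd 5 k * kd 3 l * kd 4 m - f 6 * kd 5 k * kd 4 l * kd 3 m - f 1 * kd 4 k * kd 5 l * kd 7 m + f 1 * kd 4 k * kd 7 l * kd 5 m + f 1 * kd 5 k * kd 4 l * kd 7 m - f 1 * kd 5 k * kd 7 l * kd 4 m - f 1 * kd 7 k * kd 4 l * kd 5 m + f 1 * kd 7 k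 * kd 5 l * kd 4 m + f 4 * kd 1 k * kd 5 l * kd 7 m - f 4 * kd 1 k * kd 7 l * kd 5 m - f 4 * kd 5 k * kd 1 l * kd 7 m + f 4 * kd 5 k * kd 7 l * kd 1 m + f 4 * kd 7 k * kd 1 l * kd 5 m - f 4 * kd 7 k * kd 5 l * kd 1 m - f 5 * kd 1 k * kd 4 l * kd 7 m + f 5 * kd 1 k * kd 7 l * kd 4 m + f 5 * kd 4 k * kd 1 l * kd 7 m - f 5 * kd 4 k * kd 7 l * kd 1 m - f 5 * kd 7 k * kd 1 l * kd 4 m + f 5 * kd 7 k * kd 4 l * kd 1 m + f 7 * kd 1 k * kd 4 l * kd 5 m - f 7 * kd 1 k * kd 5 l * kd 4 m - f 7 * kd 4 k * kd 1 l * kd 5 m + f 7 * kd 4 k * kd 5 l * kd 1 m + f 7 * kd 5 k * kd 1 l * kd 4 m - f 7 * kd 5 k * kd 4 l * kd 1 m - f 1 * kd 2 k * kd 5 l * kd 6 m + f 1 * kd 2 k * kd 6 l * kd 5 m + f 1 * kd 5 k * kd 2 l * kd 6 m - f 1 * kd 5 k * kd 6 l * kd 2 m - f 1 * kd 6 k *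 kd 2 l * kd 5 m + f 1 * kd 6 k * kd 5 l * kd 2 m + f 2 * kd 1 k * kd 5 l * kd 6 m - f 2 * kd 1 k * kd 6 l * kd 5 m - f 2 * kd 5 k * kd 1 l * kd 6 m + f 2 * kd 5 k * kd 6 l * kd 1 m + f 2 * kd 6 k * kd 1 l * kd 5 m - f 2 * kd 6 k * kd 5 l * kd 1 m - f 5 * kd 1 k * kd 2 l * kd 6 m + f 5 * kd 1 k * kd 6 l * kd 2 m + f 5 * kd 2 k * kd 1 l * kd 6 m - f 5 * kd 2 k * kd 6 l * kd 1 m - f 5 * kd 6 k * kd 1 l * kd 2 m + f 5 * kd 6 k * kd 2 l * kd 1 m + f 6 * kd 1 k * kd 2 l * kd 5 m - f 6 * kd 1 k * kd 5 l * kd 2 m - f 6 * kd 2 k * kd 1 l * kd 5 m + f 6 * kd 2 k * kd 5 l * kd 1 m + f 6 * kd 5 k * kd 1 l * kd 2 m - f 6 * kd 5 k * kd 2 l * kd 1 m - f 1 * kd 2 k * kd 3 l * kd 4 m + f 1 * kd 2 k * kd 4 l * kd 3 m + f 1 * kd 3 k * kd 2 l * kd 4 m - f 1 * kd 3 k * kd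 4 l * kd 2 m - f 1 * kd 4 k * kd 2 l * kd 3 m + f 1 * kd 4 k * kd 3 l * kd 2 m + f 2 * kd 1 k * kd 3 l * kd 4 m - f 2 * kd 1 k * kd 4 l * kd 3 m - f 2 * kd 3 k * kd 1 l * kd 4 m + f 2 * kd 3 k * kd 4 l * kd 1 m + f 2 * kd 4 k * kd 1 l * kd 3 m - f 2 * kd 4 k * kd 3 l * kd 1 m - f 3 * kd 1 k * kd 2 l * kd 4 m + f 3 * kd 1 k * kd 4 l * kd 2 m + f 3 * kd 2 k * kd 1 l * kd 4 m - f 3 * kd 2 k * kd 4 l * kd 1 m - f 3 * kd 4 k * kd 1 l * kd 2 m + f 3 * kd 4 k * kd 2 l * kd 1 m + f 4 * kd 1 k * kd 2 l * kd 3 m - f 4 * kd 1 k * kd 3 l * kd 2 m - f 4 * kd 2 k * kd 1 l * kd 3 m + f 4 * kd 2 k * kd 3 l * kd 1 m + f 4 * kd 3 k * kd 1 l * kd 2 m - f 4 * kd 3 k * kd 2 l * kd 1 m - f 2 * kd 3 k * kd 5 l * kd 7 m + f 2 * kd 3 k * kd 7 l * kd 5 m + f 2 * kd 5 k * kd 3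 l * kd 7 m - f 2 * kd 5 k * kd 7 l * kd 3 m - f 2 * kd 7 k * kd 3 l * kd 5 m + f 2 * kd 7 k * kd 5 l * kd 3 m + f 3 * kd 2 k * kd 5 l * kd 7 m - f 3 * kd 2 k * kd 7 l * kd 5 m - f 3 * kd 5 k * kd 2 l * kd 7 m + f 3 * kd 5 k * kd 7 l * kd 2 m + f 3 * kd 7 k * kd 2 l * kd 5 m - f 3 * kd 7 k * kd 5 l * kd 2 m - f 5 * kd 2 k * kd 3 l * kd 7 m + f 5 * kd 2 k * kd 7 l * kd 3 m + f 5 * kd 3 k * kd 2 l * kd 7 m - f 5 * kd 3 k * kd 7 l * kd 2 m - f 5 * kd 7 k * kd 2 l * kd 3 m + f 5 * kd 7 k * kd 3 l * kd 2 m + f 7 * kd 2 k * kd 3 l * kd 5 m - f 7 * kd 2 k * kd 5 l * kd 3 m - f 7 * kd 3 k * kd 2 l * kd 5 m + f 7 * kd 3 k * kd 5 l * kd 2 m + f 7 * kd 5 k * kd 2 l * kd 3 m - f 7 * kd 5 k * kd 3 l * kd 2 m - f 1 * kd 3 k * kd 6 l * kd 7 m + f 1 * kd 3 k * kd 7 l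 * kd 6 m + f 1 * kd 6 k * kd 3 l * kd 7 m - f 1 * kd 6 k * kd 7 l * kd 3 m - f 1 * kd 7 k * kd 3 l * kd 6 m + f 1 * kd 7 k * kd 6 l * kd 3 m + f 3 * kd 1 k * kd 6 l * kd 7 m - f 3 * kd 1 k * kd 7 l * kd 6 m - f 3 * kd 6 k * kd 1 l * kd 7 m + f 3 * kd 6 k * kd 7 l * kd 1 m + f 3 * kd 7 k * kd 1 l * kd 6 m - f 3 * kd 7 k * kd 6 l * kd 1 m - f 6 * kd 1 k * kd 3 l * kd 7 m + f 6 * kd 1 k * kd 7 l * kd 3 m + f 6 * kd 3 k * kd 1 l * kd 7 m - f 6 * kd 3 k * kd 7 l * kd 1 m - f 6 * kd 7 k * kd 1 l * kd 3 m + f 6 * kd 7 k * kd 3 l * kd 1 m + f 7 * kd 1 k * kd 3 l * kd 6 m - f 7 * kd 1 k * kd 6 l * kd 3 m - f 7 * kd 3 k * kd 1 l * kd 6 m + f 7 * kd 3 k * kd 6 l * kd 1 m + f 7 * kd 6 k * kd 1 l * kd 3 m - f 7 * kd 6 k * kd 3 l * kd 1 m + f 2 * kd 4 k * kd 6 l *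 kd 7 m - f 2 * kd 4 k * kd 7 l * kd 6 m - f 2 * kd 6 k * kd 4 l * kd 7 m + f 2 * kd 6 k * kd 7 l * kd 4 m + f 2 * kd 7 k * kd 4 l * kd 6 m - f 2 * kd 7 k * kd 6 l * kd 4 m - f 4 * kd 2 k * kd 6 l * kd 7 m + f 4 * kd 2 k * kd 7 l * kd 6 m + f 4 * kd 6 k * kd 2 l * kd 7 m - f 4 * kd 6 k * kd 7 l * kd 2 m - f 4 * kd 7 k * kd 2 l * kd 6 m + f 4 * kd 7 k * kd 6 l * kd 2 m + f 6 * kd 2 k * kd 4 l * kd 7 m - f 6 * kd 2 k * kd 7 l * kd 4 m - f 6 * kd 4 k * kd 2 l * kd 7 m + f 6 * kd 4 k * kd 7 l * kd 2 m + f 6 * kd 7 k * kd 2 l * kd 4 m - f 6 * kd 7 k * kd 4 l * kd 2 m - f 7 * kd 2 k * kd 4 l * kd 6 m + f 7 * kd 2 k * kd 6 l * kd 4 m + f 7 * kd 4 k * kd 2 l * kd 6 m - f 7 * kd 4 k * kd 6 l * kd 2 m - f 7 * kd 6 k * kd 2 l * kd 4 m + f 7 * kd 6 k * kd 4 l * kd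 2 m := by
  simp only [Phi, mul_add, mul_sub, mul_neg, Finset.sum_add_distrib, Finset.sum_sub_distrib,
    Finset.sum_neg_distrib, contract1]
  ring

lemma phiC2 (f : Fin 8 → Fin 8 → ℝ) (l m : Fin 8) :
    (∑ j, ∑ s, f j s * Phi j s l m) = -f 0 1 * kd 2 l * kd 7 m + f 0 1 * kd 7 l * kd 2 m + f 0 2 * kd 1 l * kd 7 m - f 0 2 * kd 7 l * kd 1 m - f 0 7 * kd 1 l * kd 2 m + f 0 7 * kd 2 l * kd 1 m + f 1 0 * kd 2 l * kd 7 m - f 1 0 * kd 7 l * kd 2 m - f 1 2 * kd 0 l * kd 7 m + f 1 2 * kd 7 l * kd 0 m + f 1 7 * kd 0 l * kd 2 m - f 1 7 * kd 2 l * kd 0 m - f 2 0 * kd 1 l * kd 7 m + f 2 0 * kd 7 l * kd 1 m + f 2 1 * kd 0 l * kd 7 m - f 2 1 * kd 7 l * kd 0 m - f 2 7 * kd 0 l * kd 1 m + f 2 7 * kd 1 l * kd 0 m + f 7 0 * kd 1 l * kd 2 m - f 7 0 * kd 2 l * kd 1 m - f 7 1 * kd 0 l * kd 2 m + f 7 1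 * kd 2 l * kd 0 m + f 7 2 * kd 0 l * kd 1 m - f 7 2 * kd 1 l * kd 0 m + f 0 2 * kd 3 l * kd 6 m - f 0 2 * kd 6 l * kd 3 m - f 0 3 * kd 2 l * kd 6 m + f 0 3 * kd 6 l * kd 2 m + f 0 6 * kd 2 l * kd 3 m - f 0 6 * kd 3 l * kd 2 m - f 2 0 * kd 3 l * kd 6 m + f 2 0 * kd 6 l * kd 3 m + f 2 3 * kd 0 l * kd 6 m - f 2 3 * kd 6 l * kd 0 m - f 2 6 * kd 0 l * kd 3 m + f 2 6 * kd 3 l * kd 0 m + f 3 0 * kd 2 l * kd 6 m - f 3 0 * kd 6 l * kd 2 m - f 3 2 * kd 0 l * kd 6 m + f 3 2 * kd 6 l * kd 0 m + f 3 6 * kd 0 l * kd 2 m - f 3 6 * kd 2 l * kd 0 m - f 6 0 * kd 2 l * kd 3 m + f 6 0 * kd 3 l * kd 2 m + f 6 2 * kd 0 l * kd 3 m - f 6 2 * kd 3 l * kd 0 m - f 6 3 * kd 0 l * kd 2 m + f 6 3 * kd 2 l * kd 0 m - f 0 3 * kd 4 l * kd 7 m + f 0 3 * kd 7 l * kd 4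 m + f 0 4 * kd 3 l * kd 7 m - f 0 4 * kd 7 l * kd 3 m - f 0 7 * kd 3 l * kd 4 m + f 0 7 * kd 4 l * kd 3 m + f 3 0 * kd 4 l * kd 7 m - f 3 0 * kd 7 l * kd 4 m - f 3 4 * kd 0 l * kd 7 m + f 3 4 * kd 7 l * kd 0 m + f 3 7 * kd 0 l * kd 4 m - f 3 7 * kd 4 l * kd 0 m - f 4 0 * kd 3 l * kd 7 m + f 4 0 * kd 7 l * kd 3 m + f 4 3 * kd 0 l * kd 7 m - f 4 3 * kd 7 l * kd 0 m - f 4 7 * kd 0 l * kd 3 m + f 4 7 * kd 3 l * kd 0 m + f 7 0 * kd 3 l * kd 4 m - f 7 0 * kd 4 l * kd 3 m - f 7 3 * kd 0 l * kd 4 m + f 7 3 * kd 4 l * kd 0 m + f 7 4 * kd 0 l * kd 3 m - f 7 4 * kd 3 l * kd 0 m - f 0 5 * kd 6 l * kd 7 m + f 0 5 * kd 7 l * kd 6 m + f 0 6 * kd 5 l * kd 7 m - f 0 6 * kd 7 l * kd 5 m - f 0 7 * kd 5 l * kd 6 m + f 0 7 * kd 6 l * kd 5 m + f 5 0 * kd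 6 l * kd 7 m - f 5 0 * kd 7 l * kd 6 m - f 5 6 * kd 0 l * kd 7 m + f 5 6 * kd 7 l * kd 0 m + f 5 7 * kd 0 l * kd 6 m - f 5 7 * kd 6 l * kd 0 m - f 6 0 * kd 5 l * kd 7 m + f 6 0 * kd 7 l * kd 5 m + f 6 5 * kd 0 l * kd 7 m - f 6 5 * kd 7 l * kd 0 m - f 6 7 * kd 0 l * kd 5 m + f 6 7 * kd 5 l * kd 0 m + f 7 0 * kd 5 l * kd 6 m - f 7 0 * kd 6 l * kd 5 m - f 7 5 * kd 0 l * kd 6 m + f 7 5 * kd 6 l * kd 0 m + f 7 6 * kd 0 l * kd 5 m - f 7 6 * kd 5 l * kd 0 m + f 0 1 * kd 4 l * kd 6 m - f 0 1 * kd 6 l * kd 4 m - f 0 4 * kd 1 l * kd 6 m + f 0 4 * kd 6 l * kd 1 m + f 0 6 * kd 1 l * kd 4 m - f 0 6 * kd 4 l * kd 1 m - f 1 0 * kd 4 l * kd 6 m + f 1 0 * kd 6 l * kd 4 m + f 1 4 * kd 0 l * kd 6 m - f 1 4 * kd 6 l * kd 0 m - f 1 6 * kd 0 l * kd 4 m +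 f 1 6 * kd 4 l * kd 0 m + f 4 0 * kd 1 l * kd 6 m - f 4 0 * kd 6 l * kd 1 m - f 4 1 * kd 0 l * kd 6 m + f 4 1 * kd 6 l * kd 0 m + f 4 6 * kd 0 l * kd 1 m - f 4 6 * kd 1 l * kd 0 m - f 6 0 * kd 1 l * kd 4 m + f 6 0 * kd 4 l * kd 1 m + f 6 1 * kd 0 l * kd 4 m - f 6 1 * kd 4 l * kd 0 m - f 6 4 * kd 0 l * kd 1 m + f 6 4 * kd 1 l * kd 0 m + f 0 2 * kd 4 l * kd 5 m - f 0 2 * kd 5 l * kd 4 m - f 0 4 * kd 2 l * kd 5 m + f 0 4 * kd 5 l * kd 2 m + f 0 5 * kd 2 l * kd 4 m - f 0 5 * kd 4 l * kd 2 m - f 2 0 * kd 4 l * kd 5 m + f 2 0 * kd 5 l * kd 4 m + f 2 4 * kd 0 l * kd 5 m - f 2 4 * kd 5 l * kd 0 m - f 2 5 * kd 0 l * kd 4 m + f 2 5 * kd 4 l * kd 0 m + f 4 0 * kd 2 l * kd 5 m - f 4 0 * kd 5 l * kd 2 m - f 4 2 * kd 0 l * kd 5 m + f 4 2 * kd 5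 l * kd 0 m + f 4 5 * kd 0 l * kd 2 m - f 4 5 * kd 2 l * kd 0 m - f 5 0 * kd 2 l * kd 4 m + f 5 0 * kd 4 l * kd 2 m + f 5 2 * kd 0 l * kd 4 m - f 5 2 * kd 4 l * kd 0 m - f 5 4 * kd 0 l * kd 2 m + f 5 4 * kd 2 l * kd 0 m - f 0 1 * kd 3 l * kd 5 m + f 0 1 * kd 5 l * kd 3 m + f 0 3 * kd 1 l * kd 5 m - f 0 3 * kd 5 l * kd 1 m - f 0 5 * kd 1 l * kd 3 m + f 0 5 * kd 3 l * kd 1 m + f 1 0 * kd 3 l * kd 5 m - f 1 0 * kd 5 l * kd 3 m - f 1 3 * kd 0 l * kd 5 m + f 1 3 * kd 5 l * kd 0 m + f 1 5 * kd 0 l * kd 3 m - f 1 5 * kd 3 l * kd 0 m - f 3 0 * kd 1 l * kd 5 m + f 3 0 * kd 5 l * kd 1 m + f 3 1 * kd 0 l * kd 5 m - f 3 1 * kd 5 l * kd 0 m - f 3 5 * kd 0 l * kd 1 m + f 3 5 * kd 1 l * kd 0 m + f 5 0 * kd 1 l * kd 3 m - f 5 0 * kd 3 l * kd 1 m - f 5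 1 * kd 0 l * kd 3 m + f 5 1 * kd 3 l * kd 0 m + f 5 3 * kd 0 l * kd 1 m - f 5 3 * kd 1 l * kd 0 m - f 3 4 * kd 5 l * kd 6 m + f 3 4 * kd 6 l * kd 5 m + f 3 5 * kd 4 l * kd 6 m - f 3 5 * kd 6 l * kd 4 m - f 3 6 * kd 4 l * kd 5 m + f 3 6 * kd 5 l * kd 4 m + f 4 3 * kd 5 l * kd 6 m - f 4 3 * kd 6 l * kd 5 m - f 4 5 * kd 3 l * kd 6 m + f 4 5 * kd 6 l * kd 3 m + f 4 6 * kd 3 l * kd 5 m - f 4 6 * kd 5 l * kd 3 m - f 5 3 * kd 4 l * kd 6 m + f 5 3 * kd 6 l * kd 4 m + f 5 4 * kd 3 l * kd 6 m - f 5 4 * kd 6 l * kd 3 m - f 5 6 * kd 3 l * kd 4 m + f 5 6 * kd 4 l * kd 3 m + f 6 3 * kd 4 l * kd 5 m - f 6 3 * kd 5 l * kd 4 m - f 6 4 * kd 3 l * kd 5 m + f 6 4 * kd 5 l * kd 3 m + f 6 5 * kd 3 l * kd 4 m - f 6 5 * kd 4 l * kd 3 m - f 1 4 * kd 5 l * kd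 7 m + f 1 4 * kd 7 l * kd 5 m + f 1 5 * kd 4 l * kd 7 m - f 1 5 * kd 7 l * kd 4 m - f 1 7 * kd 4 l * kd 5 m + f 1 7 * kd 5 l * kd 4 m + f 4 1 * kd 5 l * kd 7 m - f 4 1 * kd 7 l * kd 5 m - f 4 5 * kd 1 l * kd 7 m + f 4 5 * kd 7 l * kd 1 m + f 4 7 * kd 1 l * kd 5 m - f 4 7 * kd 5 l * kd 1 m - f 5 1 * kd 4 l * kd 7 m + f 5 1 * kd 7 l * kd 4 m + f 5 4 * kd 1 l * kd 7 m - f 5 4 * kd 7 l * kd 1 m - f 5 7 * kd 1 l * kd 4 m + f 5 7 * kd 4 l * kd 1 m + f 7 1 * kd 4 l * kd 5 m - f 7 1 * kd 5 l * kd 4 m - f 7 4 * kd 1 l * kd 5 m + f 7 4 * kd 5 l * kd 1 m + f 7 5 * kd 1 l * kd 4 m - f 7 5 * kd 4 l * kd 1 m - f 1 2 * kd 5 l * kd 6 m + f 1 2 * kd 6 l * kd 5 m + f 1 5 * kd 2 l * kd 6 m - f 1 5 * kd 6 l * kd 2 m - f 1 6 * kd 2 l * kd 5 m + f 1 6 *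 kd 5 l * kd 2 m + f 2 1 * kd 5 l * kd 6 m - f 2 1 * kd 6 l * kd 5 m - f 2 5 * kd 1 l * kd 6 m + f 2 5 * kd 6 l * kd 1 m + f 2 6 * kd 1 l * kd 5 m - f 2 6 * kd 5 l * kd 1 m - f 5 1 * kd 2 l * kd 6 m + f 5 1 * kd 6 l * kd 2 m + f 5 2 * kd 1 l * kd 6 m - f 5 2 * kd 6 l * kd 1 m - f 5 6 * kd 1 l * kd 2 m + f 5 6 * kd 2 l * kd 1 m + f 6 1 * kd 2 l * kd 5 m - f 6 1 * kd 5 l * kd 2 m - f 6 2 * kd 1 l * kd 5 m + f 6 2 * kd 5 l * kd 1 m + f 6 5 * kd 1 l * kd 2 m - f 6 5 * kd 2 l * kd 1 m - f 1 2 * kd 3 l * kd 4 m + f 1 2 * kd 4 l * kd 3 m + f 1 3 * kd 2 l * kd 4 m - f 1 3 * kd 4 l * kd 2 m - f 1 4 * kd 2 l * kd 3 m + f 1 4 * kd 3 l * kd 2 m + f 2 1 * kd 3 l * kd 4 m - f 2 1 * kd 4 l * kd 3 m - f 2 3 * kd 1 l * kd 4 m + f 2 3 * kd 4 l * kd 1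 m + f 2 4 * kd 1 l * kd 3 m - f 2 4 * kd 3 l * kd 1 m - f 3 1 * kd 2 l * kd 4 m + f 3 1 * kd 4 l * kd 2 m + f 3 2 * kd 1 l * kd 4 m - f 3 2 * kd 4 l * kd 1 m - f 3 4 * kd 1 l * kd 2 m + f 3 4 * kd 2 l * kd 1 m + f 4 1 * kd 2 l * kd 3 m - f 4 1 * kd 3 l * kd 2 m - f 4 2 * kd 1 l * kd 3 m + f 4 2 * kd 3 l * kd 1 m + f 4 3 * kd 1 l * kd 2 m - f 4 3 * kd 2 l * kd 1 m - f 2 3 * kd 5 l * kd 7 m + f 2 3 * kd 7 l * kd 5 m + f 2 5 * kd 3 l * kd 7 m - f 2 5 * kd 7 l * kd 3 m - f 2 7 * kd 3 l * kd 5 m + f 2 7 * kd 5 l * kd 3 m + f 3 2 * kd 5 l * kd 7 m - f 3 2 * kd 7 l * kd 5 m - f 3 5 * kd 2 l * kd 7 m + f 3 5 * kd 7 l * kd 2 m + f 3 7 * kd 2 l * kd 5 m - f 3 7 * kd 5 l * kd 2 m - f 5 2 * kd 3 l * kd 7 m + f 5 2 * kd 7 l * kd 3 m + f 5 3 * kd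 2 l * kd 7 m - f 5 3 * kd 7 l * kd 2 m - f 5 7 * kd 2 l * kd 3 m + f 5 7 * kd 3 l * kd 2 m + f 7 2 * kd 3 l * kd 5 m - f 7 2 * kd 5 l * kd 3 m - f 7 3 * kd 2 l * kd 5 m + f 7 3 * kd 5 l * kd 2 m + f 7 5 * kd 2 l * kd 3 m - f 7 5 * kd 3 l * kd 2 m - f 1 3 * kd 6 l * kd 7 m + f 1 3 * kd 7 l * kd 6 m + f 1 6 * kd 3 l * kd 7 m - f 1 6 * kd 7 l * kd 3 m - f 1 7 * kd 3 l * kd 6 m + f 1 7 * kd 6 l * kd 3 m + f 3 1 * kd 6 l * kd 7 m - f 3 1 * kd 7 l * kd 6 m - f 3 6 * kd 1 l * kd 7 m + f 3 6 * kd 7 l * kd 1 m + f 3 7 * kd 1 l * kd 6 m - f 3 7 * kd 6 l * kd 1 m - f 6 1 * kd 3 l * kd 7 m + f 6 1 * kd 7 l * kd 3 m + f 6 3 * kd 1 l * kd 7 m - f 6 3 * kd 7 l * kd 1 m - f 6 7 * kd 1 l * kd 3 m + f 6 7 * kd 3 l * kd 1 m + f 7 1 * kd 3 l * kd 6 m -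 f 7 1 * kd 6 l * kd 3 m - f 7 3 * kd 1 l * kd 6 m + f 7 3 * kd 6 l * kd 1 m + f 7 6 * kd 1 l * kd 3 m - f 7 6 * kd 3 l * kd 1 m + f 2 4 * kd 6 l * kd 7 m - f 2 4 * kd 7 l * kd 6 m - f 2 6 * kd 4 l * kd 7 m + f 2 6 * kd 7 l * kd 4 m + f 2 7 * kd 4 l * kd 6 m - f 2 7 * kd 6 l * kd 4 m - f 4 2 * kd 6 l * kd 7 m + f 4 2 * kd 7 l * kd 6 m + f 4 6 * kd 2 l * kd 7 m - f 4 6 * kd 7 l * kd 2 m - f 4 7 * kd 2 l * kd 6 m + f 4 7 * kd 6 l * kd 2 m + f 6 2 * kd 4 l * kd 7 m - f 6 2 * kd 7 l * kd 4 m - f 6 4 * kd 2 l * kd 7 m + f 6 4 * kd 7 l * kd 2 m + f 6 7 * kd 2 l * kd 4 m - f 6 7 * kd 4 l * kd 2 m - f 7 2 * kd 4 l * kd 6 m + f 7 2 * kd 6 l * kd 4 m + f 7 4 * kd 2 l * kd 6 m - f 7 4 * kd 6 l * kd 2 m - f 7 6 * kd 2 l * kd 4 m + f 7 6 * kd 4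 l * kd 2 m := by
  simp only [Phi, mul_add, mul_sub, mul_neg, Finset.sum_add_distrib, Finset.sum_sub_distrib,
    Finset.sum_neg_distrib, contract2]
  ring

lemma phiC3 (f : Fin 8 → Fin 8 → Fin 8 → ℝ) (i : Fin 8) :
    (∑ j, ∑ k, ∑ l, f j k l * Phi j k l i) = -f 0 1 2 * kd 7 i + f 0 1 7 * kd 2 i + f 0 2 1 * kd 7 i - f 0 2 7 * kd 1 i - f 0 7 1 * kd 2 i + f 0 7 2 * kd 1 i + f 1 0 2 * kd 7 i - f 1 0 7 * kd 2 i - f 1 2 0 * kd 7 i + f 1 2 7 * kd 0 i + f 1 7 0 * kd 2 i - f 1 7 2 * kd 0 i - f 2 0 1 * kd 7 i + f 2 0 7 * kd 1 i + f 2 1 0 * kd 7 i - f 2 1 7 * kd 0 i - f 2 7 0 * kd 1 i + f 2 7 1 * kd 0 i + f 7 0 1 * kd 2 i - f 7 0 2 * kd 1 i - f 7 1 0 * kd 2 i + f 7 1 2 * kd 0 i + f 7 2 0 * kd 1 i - f 7 2 1 * kd 0 i + f 0 2 3 * kd 6 i - f 0 2 6 * kd 3 i - f 0 3 2 * kd 6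 i + f 0 3 6 * kd 2 i + f 0 6 2 * kd 3 i - f 0 6 3 * kd 2 i - f 2 0 3 * kd 6 i + f 2 0 6 * kd 3 i + f 2 3 0 * kd 6 i - f 2 3 6 * kd 0 i - f 2 6 0 * kd 3 i + f 2 6 3 * kd 0 i + f 3 0 2 * kd 6 i - f 3 0 6 * kd 2 i - f 3 2 0 * kd 6 i + f 3 2 6 * kd 0 i + f 3 6 0 * kd 2 i - f 3 6 2 * kd 0 i - f 6 0 2 * kd 3 i + f 6 0 3 * kd 2 i + f 6 2 0 * kd 3 i - f 6 2 3 * kd 0 i - f 6 3 0 * kd 2 i + f 6 3 2 * kd 0 i - f 0 3 4 * kd 7 i + f 0 3 7 * kd 4 i + f 0 4 3 * kd 7 i - f 0 4 7 * kd 3 i - f 0 7 3 * kd 4 i + f 0 7 4 * kd 3 i + f 3 0 4 * kd 7 i - f 3 0 7 * kd 4 i - f 3 4 0 * kd 7 i + f 3 4 7 * kd 0 i + f 3 7 0 * kd 4 i - f 3 7 4 * kd 0 i - f 4 0 3 * kd 7 i + f 4 0 7 * kd 3 i + f 4 3 0 * kd 7 i - f 4 3 7 * kd 0 i - f 4 7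 0 * kd 3 i + f 4 7 3 * kd 0 i + f 7 0 3 * kd 4 i - f 7 0 4 * kd 3 i - f 7 3 0 * kd 4 i + f 7 3 4 * kd 0 i + f 7 4 0 * kd 3 i - f 7 4 3 * kd 0 i - f 0 5 6 * kd 7 i + f 0 5 7 * kd 6 i + f 0 6 5 * kd 7 i - f 0 6 7 * kd 5 i - f 0 7 5 * kd 6 i + f 0 7 6 * kd 5 i + f 5 0 6 * kd 7 i - f 5 0 7 * kd 6 i - f 5 6 0 * kd 7 i + f 5 6 7 * kd 0 i + f 5 7 0 * kd 6 i - f 5 7 6 * kd 0 i - f 6 0 5 * kd 7 i + f 6 0 7 * kd 5 i + f 6 5 0 * kd 7 i - f 6 5 7 * kd 0 i - f 6 7 0 * kd 5 i + f 6 7 5 * kd 0 i + f 7 0 5 * kd 6 i - f 7 0 6 * kd 5 i - f 7 5 0 * kd 6 i + f 7 5 6 * kd 0 i + f 7 6 0 * kd 5 i - f 7 6 5 * kd 0 i + f 0 1 4 * kd 6 i - f 0 1 6 * kd 4 i - f 0 4 1 * kd 6 i + f 0 4 6 * kd 1 i + f 0 6 1 * kd 4 i - f 0 6 4 * kd 1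 i - f 1 0 4 * kd 6 i + f 1 0 6 * kd 4 i + f 1 4 0 * kd 6 i - f 1 4 6 * kd 0 i - f 1 6 0 * kd 4 i + f 1 6 4 * kd 0 i + f 4 0 1 * kd 6 i - f 4 0 6 * kd 1 i - f 4 1 0 * kd 6 i + f 4 1 6 * kd 0 i + f 4 6 0 * kd 1 i - f 4 6 1 * kd 0 i - f 6 0 1 * kd 4 i + f 6 0 4 * kd 1 i + f 6 1 0 * kd 4 i - f 6 1 4 * kd 0 i - f 6 4 0 * kd 1 i + f 6 4 1 * kd 0 i + f 0 2 4 * kd 5 i - f 0 2 5 * kd 4 i - f 0 4 2 * kd 5 i + f 0 4 5 * kd 2 i + f 0 5 2 * kd 4 i - f 0 5 4 * kd 2 i - f 2 0 4 * kd 5 i + f 2 0 5 * kd 4 i + f 2 4 0 * kd 5 i - f 2 4 5 * kd 0 i - f 2 5 0 * kd 4 i + f 2 5 4 * kd 0 i + f 4 0 2 * kd 5 i - f 4 0 5 * kd 2 i - f 4 2 0 * kd 5 i + f 4 2 5 * kd 0 i + f 4 5 0 * kd 2 i - f 4 5 2 * kd 0 i - f 5 0 2 * kd 4 i + f 5 0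 4 * kd 2 i + f 5 2 0 * kd 4 i - f 5 2 4 * kd 0 i - f 5 4 0 * kd 2 i + f 5 4 2 * kd 0 i - f 0 1 3 * kd 5 i + f 0 1 5 * kd 3 i + f 0 3 1 * kd 5 i - f 0 3 5 * kd 1 i - f 0 5 1 * kd 3 i + f 0 5 3 * kd 1 i + f 1 0 3 * kd 5 i - f 1 0 5 * kd 3 i - f 1 3 0 * kd 5 i + f 1 3 5 * kd 0 i + f 1 5 0 * kd 3 i - f 1 5 3 * kd 0 i - f 3 0 1 * kd 5 i + f 3 0 5 * kd 1 i + f 3 1 0 * kd 5 i - f 3 1 5 * kd 0 i - f 3 5 0 * kd 1 i + f 3 5 1 * kd 0 i + f 5 0 1 * kd 3 i - f 5 0 3 * kd 1 i - f 5 1 0 * kd 3 i + f 5 1 3 * kd 0 i + f 5 3 0 * kd 1 i - f 5 3 1 * kd 0 i - f 3 4 5 * kd 6 i + f 3 4 6 * kd 5 i + f 3 5 4 * kd 6 i - f 3 5 6 * kd 4 i - f 3 6 4 * kd 5 i + f 3 6 5 * kd 4 i + f 4 3 5 * kd 6 i - f 4 3 6 * kd 5 i - f 4 5 3 * kd 6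 i + f 4 5 6 * kd 3 i + f 4 6 3 * kd 5 i - f 4 6 5 * kd 3 i - f 5 3 4 * kd 6 i + f 5 3 6 * kd 4 i + f 5 4 3 * kd 6 i - f 5 4 6 * kd 3 i - f 5 6 3 * kd 4 i + f 5 6 4 * kd 3 i + f 6 3 4 * kd 5 i - f 6 3 5 * kd 4 i - f 6 4 3 * kd 5 i + f 6 4 5 * kd 3 i + f 6 5 3 * kd 4 i - f 6 5 4 * kd 3 i - f 1 4 5 * kd 7 i + f 1 4 7 * kd 5 i + f 1 5 4 * kd 7 i - f 1 5 7 * kd 4 i - f 1 7 4 * kd 5 i + f 1 7 5 * kd 4 i + f 4 1 5 * kd 7 i - f 4 1 7 * kd 5 i - f 4 5 1 * kd 7 i + f 4 5 7 * kd 1 i + f 4 7 1 * kd 5 i - f 4 7 5 * kd 1 i - f 5 1 4 * kd 7 i + f 5 1 7 * kd 4 i + f 5 4 1 * kd 7 i - f 5 4 7 * kd 1 i - f 5 7 1 * kd 4 i + f 5 7 4 * kd 1 i + f 7 1 4 * kd 5 i - f 7 1 5 * kd 4 i - f 7 4 1 * kd 5 i + f 7 4 5 * kd 1 i + f 7 5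 1 * kd 4 i - f 7 5 4 * kd 1 i - f 1 2 5 * kd 6 i + f 1 2 6 * kd 5 i + f 1 5 2 * kd 6 i - f 1 5 6 * kd 2 i - f 1 6 2 * kd 5 i + f 1 6 5 * kd 2 i + f 2 1 5 * kd 6 i - f 2 1 6 * kd 5 i - f 2 5 1 * kd 6 i + f 2 5 6 * kd 1 i + f 2 6 1 * kd 5 i - f 2 6 5 * kd 1 i - f 5 1 2 * kd 6 i + f 5 1 6 * kd 2 i + f 5 2 1 * kd 6 i - f 5 2 6 * kd 1 i - f 5 6 1 * kd 2 i + f 5 6 2 * kd 1 i + f 6 1 2 * kd 5 i - f 6 1 5 * kd 2 i - f 6 2 1 * kd 5 i + f 6 2 5 * kd 1 i + f 6 5 1 * kd 2 i - f 6 5 2 * kd 1 i - f 1 2 3 * kd 4 i + f 1 2 4 * kd 3 i + f 1 3 2 * kd 4 i - f 1 3 4 * kd 2 i - f 1 4 2 * kd 3 i + f 1 4 3 * kd 2 i + f 2 1 3 * kd 4 i - f 2 1 4 * kd 3 i - f 2 3 1 * kd 4 i + f 2 3 4 * kd 1 i + f 2 4 1 * kd 3 i - f 2 4 3 * kd 1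 i - f 3 1 2 * kd 4 i + f 3 1 4 * kd 2 i + f 3 2 1 * kd 4 i - f 3 2 4 * kd 1 i - f 3 4 1 * kd 2 i + f 3 4 2 * kd 1 i + f 4 1 2 * kd 3 i - f 4 1 3 * kd 2 i - f 4 2 1 * kd 3 i + f 4 2 3 * kd 1 i + f 4 3 1 * kd 2 i - f 4 3 2 * kd 1 i - f 2 3 5 * kd 7 i + f 2 3 7 * kd 5 i + f 2 5 3 * kd 7 i - f 2 5 7 * kd 3 i - f 2 7 3 * kd 5 i + f 2 7 5 * kd 3 i + f 3 2 5 * kd 7 i - f 3 2 7 * kd 5 i - f 3 5 2 * kd 7 i + f 3 5 7 * kd 2 i + f 3 7 2 * kd 5 i - f 3 7 5 * kd 2 i - f 5 2 3 * kd 7 i + f 5 2 7 * kd 3 i + f 5 3 2 * kd 7 i - f 5 3 7 * kd 2 i - f 5 7 2 * kd 3 i + f 5 7 3 * kd 2 i + f 7 2 3 * kd 5 i - f 7 2 5 * kd 3 i - f 7 3 2 * kd 5 i + f 7 3 5 * kd 2 i + f 7 5 2 * kd 3 i - f 7 5 3 * kd 2 i - f 1 3 6 * kd 7 i + f 1 3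 7 * kd 6 i + f 1 6 3 * kd 7 i - f 1 6 7 * kd 3 i - f 1 7 3 * kd 6 i + f 1 7 6 * kd 3 i + f 3 1 6 * kd 7 i - f 3 1 7 * kd 6 i - f 3 6 1 * kd 7 i + f 3 6 7 * kd 1 i + f 3 7 1 * kd 6 i - f 3 7 6 * kd 1 i - f 6 1 3 * kd 7 i + f 6 1 7 * kd 3 i + f 6 3 1 * kd 7 i - f 6 3 7 * kd 1 i - f 6 7 1 * kd 3 i + f 6 7 3 * kd 1 i + f 7 1 3 * kd 6 i - f 7 1 6 * kd 3 i - f 7 3 1 * kd 6 i + f 7 3 6 * kd 1 i + f 7 6 1 * kd 3 i - f 7 6 3 * kd 1 i + f 2 4 6 * kd 7 i - f 2 4 7 * kd 6 i - f 2 6 4 * kd 7 i + f 2 6 7 * kd 4 i + f 2 7 4 * kd 6 i - f 2 7 6 * kd 4 i - f 4 2 6 * kd 7 i + f 4 2 7 * kd 6 i + f 4 6 2 * kd 7 i - f 4 6 7 * kd 2 i - f 4 7 2 * kd 6 i + f 4 7 6 * kd 2 i + f 6 2 4 * kd 7 i - f 6 2 7 * kd 4 i - f 6 4 2 * kd 7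 i + f 6 4 7 * kd 2 i + f 6 7 2 * kd 4 i - f 6 7 4 * kd 2 i - f 7 2 4 * kd 6 i + f 7 2 6 * kd 4 i + f 7 4 2 * kd 6 i - f 7 4 6 * kd 2 i - f 7 6 2 * kd 4 i + f 7 6 4 * kd 2 i := by
  simp only [Phi, mul_add, mul_sub, mul_neg, Finset.sum_add_distrib, Finset.sum_sub_distrib,
    Finset.sum_neg_distrib, contract3]
  ring

/-- If a 3-form `T` and a 1-form `θ` satisfy the structure equation
`T_{klm} = (1/2)T_{jsk}Φ_{jslm} - (1/2)T_{jsl}Φ_{jskm} + (1/2)T_{jsm}Φ_{jskl} + (7/6)θ_sΦ_{sklm}`,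
then `θ_i = -(1/7) T_{jkl}Φ_{jkli}`. -/
theorem spin7_torsion_determines_lee_form :
    ∀ T : Fin 8 → Fin 8 → Fin 8 → ℝ, ∀ θ : Fin 8 → ℝ,
      (∀ i j k, T i j k = -T j i k ∧ T i j k = -T i k j) →
      (∀ k l m, T k l m =
          (1/2) * (∑ j, ∑ s, T j s k * Phi j s l m)
        - (1/2) * (∑ j, ∑ s, T j s l * Phi j s k m)
        + (1/2) * (∑ j, ∑ s, T j s m * Phi j s k l)
        + (7/6) * ∑ s, θ s * Phi s k l m) →
      ∀ i, θ i = -(1/7) * ∑ j, ∑ k, ∑ l, T j k l * Phi j k l i := by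
  intro T θ hant hT
  have H0 : θ 0 = -(1/7) * ∑ j, ∑ k, ∑ l, T j k l * Phi j k l 0 := by
    have e := hT 1 2 7
    simp only [phiC2, phiC1] at e
    rw [phiC3]
    simp (config := { maxSteps := 10000000 }) only [kd, Fin.reduceEq, if_true, if_false, ite_true, ite_false, reduceIte, mul_one, mul_zero, zero_mul, one_mul, add_zero, zero_add, sub_zero, zero_sub, neg_zero, neg_neg, mul_neg, neg_mul] at e ⊢
    linear_combination (6/7 : ℝ) * e + (3/7 : ℝ) * (hant 0 1 1).1 + (-3/7 : ℝ) * (hant 0 1 1).2 + (3/7 : ℝ) * (hant 0 2 2).1 + (-3/7 : ℝ) * (hant 0 2 2).2 + (3/7 : ℝ) * (hant 0 7 7).1 + (-3/7 : ℝ) * (hant 0 7 7).2 + (-3/7 : ℝ) * (hant 1 2 7).1 + (-2/7 : ℝ) * (hant 1 2 7).2 + (3/7 : ℝ) * (hant 1 3 5).1 + (-2/7 : ℝ) * (hant 1 3 5).2 + (-3/7 : ℝ) * (hant 1 4 6).1 + (2/7 : ℝ) * (hant 1 4 6).2 + (1/7 : ℝ) * (hant 1 5 3).1 + (-1/7 :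 ℝ) * (hant 1 6 4).1 + (1/7 : ℝ) * (hant 1 7 2).1 + (2/7 : ℝ) * (hant 2 1 7).2 + (-3/7 : ℝ) * (hant 2 3 6).1 + (2/7 : ℝ) * (hant 2 3 6).2 + (-3/7 : ℝ) * (hant 2 4 5).1 + (2/7 : ℝ) * (hant 2 4 5).2 + (-1/7 : ℝ) * (hant 2 5 4).1 + (-1/7 : ℝ) * (hant 2 6 3).1 + (-1/7 : ℝ) * (hant 2 7 1).1 + (-4/7 : ℝ) * (hant 3 1 5).2 + (4/7 : ℝ) * (hant 3 2 6).2 + (-2/7 : ℝ) * (hant 3 4 7).2 + (2/7 : ℝ) * (hant 3 5 1).1 + (-2/7 : ℝ) * (hant 3 6 2).1 + (1/7 : ℝ) * (hant 3 7 4).1 + (4/7 : ℝ) * (hant 4 1 6).2 + (4/7 : ℝ) * (hant 4 2 5).2 + (2/7 : ℝ) * (hant 4 3 7).2 + (-2/7 : ℝ) * (hant 4 5 2).1 + (-2/7 : ℝ) * (hant 4 6 1).1 + (-1/7 : ℝ) * (hant 4 7 3).1 + (-2/7 : ℝ) * (hant 5 6 7).2 + (1/7 : ℝ) * (hant 5 7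 6).1 + (2/7 : ℝ) * (hant 6 5 7).2 + (-1/7 : ℝ) * (hant 6 7 5).1
  have H1 : θ 1 = -(1/7) * ∑ j, ∑ k, ∑ l, T j k l * Phi j k l 1 := by
    have e := hT 0 2 7
    simp only [phiC2, phiC1] at e
    rw [phiC3]
    simp (config := { maxSteps := 10000000 }) only [kd, Fin.reduceEq, if_true, if_false, ite_true, ite_false, reduceIte, mul_one, mul_zero, zero_mul, one_mul, add_zero, zero_add, sub_zero, zero_sub, neg_zero, neg_neg, mul_neg, neg_mul] at e ⊢
    linear_combination (-6/7 : ℝ) * e + (-3/7 : ℝ) * (hant 0 0 1).1 + (6/7 : ℝ) * (hant 0 0 1).2 + (-3/7 : ℝ) * (hant 0 1 0).1 + (3/7 : ℝ) * (hant 0 2 7).1 + (2/7 : ℝ) * (hant 0 2 7).2 + (-3/7 : ℝ) * (hant 0 3 5).1 + (2/7 : ℝ) * (hant 0 3 5).2 + (3/7 : ℝ) * (hant 0 4 6).1 + (-2/7 : ℝ) * (hant 0 4 6).2 + (-1/7 : ℝ) * (hant 0 5 3).1 + (1/7 : ℝ) * (hant 0 6 4).1 + (-1/7 : ℝ) * (hant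 0 7 2).1 + (3/7 : ℝ) * (hant 1 2 2).1 + (-3/7 : ℝ) * (hant 1 2 2).2 + (3/7 : ℝ) * (hant 1 7 7).1 + (-3/7 : ℝ) * (hant 1 7 7).2 + (-2/7 : ℝ) * (hant 2 0 7).2 + (3/7 : ℝ) * (hant 2 3 4).1 + (-2/7 : ℝ) * (hant 2 3 4).2 + (1/7 : ℝ) * (hant 2 4 3).1 + (3/7 : ℝ) * (hant 2 5 6).1 + (-2/7 : ℝ) * (hant 2 5 6).2 + (1/7 : ℝ) * (hant 2 6 5).1 + (1/7 : ℝ) * (hant 2 7 0).1 + (4/7 : ℝ) * (hant 3 0 5).2 + (-4/7 : ℝ) * (hant 3 2 4).2 + (2/7 : ℝ) * (hant 3 4 2).1 + (-2/7 : ℝ) * (hant 3 5 0).1 + (-2/7 : ℝ) * (hant 3 6 7).2 + (1/7 : ℝ) * (hant 3 7 6).1 + (-4/7 : ℝ) * (hant 4 0 6).2 + (-2/7 : ℝ) * (hant 4 5 7).2 + (2/7 : ℝ) * (hant 4 6 0).1 + (1/7 : ℝ) * (hant 4 7 5).1 + (-4/7 : ℝ) * (hant 5 2 6).2 + (2/7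 : ℝ) * (hant 5 4 7).2 + (2/7 : ℝ) * (hant 5 6 2).1 + (-1/7 : ℝ) * (hant 5 7 4).1 + (2/7 : ℝ) * (hant 6 3 7).2 + (-1/7 : ℝ) * (hant 6 7 3).1
  have H2 : θ 2 = -(1/7) * ∑ j, ∑ k, ∑ l, T j k l * Phi j k l 2 := by
    have e := hT 0 1 7
    simp only [phiC2, phiC1] at e
    rw [phiC3]
    simp (config := { maxSteps := 10000000 }) only [kd, Fin.reduceEq, if_true, if_false, ite_true, ite_false, reduceIte, mul_one, mul_zero, zero_mul, one_mul, add_zero, zero_add, sub_zero, zero_sub, neg_zero, neg_neg, mul_neg, neg_mul] at e ⊢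
    linear_combination (6/7 : ℝ) * e + (-3/7 : ℝ) * (hant 0 0 2).1 + (6/7 : ℝ) * (hant 0 0 2).2 + (-3/7 : ℝ) * (hant 0 1 7).1 + (-2/7 : ℝ) * (hant 0 1 7).2 + (-3/7 : ℝ) * (hant 0 2 0).1 + (3/7 : ℝ) * (hant 0 3 6).1 + (-2/7 : ℝ) * (hant 0 3 6).2 + (3/7 : ℝ) * (hant 0 4 5).1 + (-2/7 : ℝ) * (hant 0 4 5).2 + (1/7 : ℝ) * (hant 0 5 4).1 + (1/7 : ℝ) * (hant 0 6 3).1 + (1/7 : ℝ) * (hant 0 7 1).1 + (2/7 : ℝ) * (hant 1 0 7).2 + (-3/7 : ℝ) * (hant 1 1 2).1 + (6/7 : ℝ) * (hant 1 1 2).2 + (-3/7 : ℝ) * (hant 1 2 1).1 + (-3/7 : ℝ) * (hant 1 3 4).1 + (2/7 : ℝ) * (hant 1 3 4).2 + (-1/7 : ℝ) * (hant 1 4 3).1 + (-3/7 : ℝ) * (hant 1 5 6).1 + (2/7 : ℝ) * (hant 1 5 6).2 + (-1/7 : ℝ) * (hant 1 6 5).1 + (-1/7 : ℝ) * (hant 1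 7 0).1 + (3/7 : ℝ) * (hant 2 7 7).1 + (-3/7 : ℝ) * (hant 2 7 7).2 + (-4/7 : ℝ) * (hant 3 0 6).2 + (4/7 : ℝ) * (hant 3 1 4).2 + (-2/7 : ℝ) * (hant 3 4 1).1 + (-2/7 : ℝ) * (hant 3 5 7).2 + (2/7 : ℝ) * (hant 3 6 0).1 + (1/7 : ℝ) * (hant 3 7 5).1 + (-4/7 : ℝ) * (hant 4 0 5).2 + (2/7 : ℝ) * (hant 4 5 0).1 + (2/7 : ℝ) * (hant 4 6 7).2 + (-1/7 : ℝ) * (hant 4 7 6).1 + (4/7 : ℝ) * (hant 5 1 6).2 + (2/7 : ℝ) * (hant 5 3 7).2 + (-2/7 : ℝ) * (hant 5 6 1).1 + (-1/7 : ℝ) * (hant 5 7 3).1 + (-2/7 : ℝ) * (hant 6 4 7).2 + (1/7 : ℝ) * (hant 6 7 4).1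
  have H3 : θ 3 = -(1/7) * ∑ j, ∑ k, ∑ l, T j k l * Phi j k l 3 := by
    have e := hT 0 1 5
    simp only [phiC2, phiC1] at e
    rw [phiC3]
    simp (config := { maxSteps := 10000000 }) only [kd, Fin.reduceEq, if_true, if_false, ite_true, ite_false, reduceIte, mul_one, mul_zero, zero_mul, one_mul, add_zero, zero_add, sub_zero, zero_sub, neg_zero, neg_neg, mul_neg, neg_mul] at e ⊢
    linear_combination (6/7 : ℝ) * e + (-3/7 : ℝ) * (hant 0 0 3).1 + (6/7 : ℝ) * (hant 0 0 3).2 + (-3/7 : ℝ) * (hant 0 1 5).1 + (-2/7 : ℝ) * (hant 0 1 5).2 + (-3/7 : ℝ) * (hant 0 2 6).1 + (2/7 : ℝ) * (hant 0 2 6).2 + (-3/7 : ℝ) * (hant 0 3 0).1 + (-3/7 : ℝ) * (hant 0 4 7).1 + (2/7 : ℝ) * (hant 0 4 7).2 + (1/7 : ℝ) * (hant 0 5 1).1 + (-1/7 : ℝ) * (hant 0 6 2).1 + (-1/7 : ℝ) * (hant 0 7 4).1 + (2/7 : ℝ) * (hant 1 0 5).2 + (-3/7 : ℝ) * (hant 1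 1 3).1 + (6/7 : ℝ) * (hant 1 1 3).2 + (3/7 : ℝ) * (hant 1 2 4).1 + (-2/7 : ℝ) * (hant 1 2 4).2 + (-3/7 : ℝ) * (hant 1 3 1).1 + (1/7 : ℝ) * (hant 1 4 2).1 + (-1/7 : ℝ) * (hant 1 5 0).1 + (-3/7 : ℝ) * (hant 1 6 7).1 + (2/7 : ℝ) * (hant 1 6 7).2 + (-1/7 : ℝ) * (hant 1 7 6).1 + (4/7 : ℝ) * (hant 2 0 6).2 + (-4/7 : ℝ) * (hant 2 1 4).2 + (2/7 : ℝ) * (hant 2 4 1).1 + (3/7 : ℝ) * (hant 2 5 7).1 + (-4/7 : ℝ) * (hant 2 5 7).2 + (-2/7 : ℝ) * (hant 2 6 0).1 + (2/7 : ℝ) * (hant 2 7 5).1 + (3/7 : ℝ) * (hant 3 5 5).1 + (-3/7 : ℝ) * (hant 3 5 5).2 + (4/7 : ℝ) * (hant 4 0 7).2 + (-3/7 : ℝ) * (hant 4 5 6).1 + (4/7 : ℝ) * (hant 4 5 6).2 + (-2/7 : ℝ) * (hant 4 6 5).1 + (-2/7 : ℝ) * (hant 4 7 0).1 + (-2/7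 : ℝ) * (hant 5 2 7).2 + (2/7 : ℝ) * (hant 5 4 6).2 + (-1/7 : ℝ) * (hant 5 6 4).1 + (1/7 : ℝ) * (hant 5 7 2).1 + (4/7 : ℝ) * (hant 6 1 7).2 + (-2/7 : ℝ) * (hant 6 7 1).1
  have H4 : θ 4 = -(1/7) * ∑ j, ∑ k, ∑ l, T j k l * Phi j k l 4 := by
    have e := hT 0 1 6
    simp only [phiC2, phiC1] at e
    rw [phiC3]
    simp (config := { maxSteps := 10000000 }) only [kd, Fin.reduceEq, if_true, if_false, ite_true, ite_false, reduceIte, mul_one, mul_zero, zero_mul, one_mul, add_zero, zero_add, sub_zero, zero_sub, neg_zero, neg_neg, mul_neg, neg_mul] at e ⊢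
    linear_combination (-6/7 : ℝ) * e + (-3/7 : ℝ) * (hant 0 0 4).1 + (6/7 : ℝ) * (hant 0 0 4).2 + (3/7 : ℝ) * (hant 0 1 6).1 + (2/7 : ℝ) * (hant 0 1 6).2 + (-3/7 : ℝ) * (hant 0 2 5).1 + (2/7 : ℝ) * (hant 0 2 5).2 + (3/7 : ℝ) * (hant 0 3 7).1 + (-2/7 : ℝ) * (hant 0 3 7).2 + (-3/7 : ℝ) * (hant 0 4 0).1 + (-1/7 : ℝ) * (hant 0 5 2).1 + (-1/7 : ℝ) * (hant 0 6 1).1 + (1/7 : ℝ) * (hant 0 7 3).1 + (-2/7 : ℝ) * (hant 1 0 6).2 + (-3/7 : ℝ) * (hant 1 1 4).1 + (6/7 : ℝ) * (hant 1 1 4).2 + (-3/7 : ℝ) * (hant 1 2 3).1 + (2/7 : ℝ) * (hant 1 2 3).2 + (-1/7 : ℝ) * (hant 1 3 2).1 + (-3/7 : ℝ) * (hant 1 4 1).1 + (-3/7 : ℝ) * (hant 1 5 7).1 + (2/7 : ℝ) * (hant 1 5 7).2 + (1/7 : ℝ) * (hant 1 6 0).1 + (-1/7 : ℝ) * (hant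 1 7 5).1 + (4/7 : ℝ) * (hant 2 0 5).2 + (4/7 : ℝ) * (hant 2 1 3).2 + (-2/7 : ℝ) * (hant 2 3 1).1 + (-2/7 : ℝ) * (hant 2 5 0).1 + (-3/7 : ℝ) * (hant 2 6 7).1 + (4/7 : ℝ) * (hant 2 6 7).2 + (-2/7 : ℝ) * (hant 2 7 6).1 + (-4/7 : ℝ) * (hant 3 0 7).2 + (2/7 : ℝ) * (hant 3 5 6).2 + (-1/7 : ℝ) * (hant 3 6 5).1 + (2/7 : ℝ) * (hant 3 7 0).1 + (3/7 : ℝ) * (hant 4 6 6).1 + (-3/7 : ℝ) * (hant 4 6 6).2 + (4/7 : ℝ) * (hant 5 1 7).2 + (-2/7 : ℝ) * (hant 5 3 6).2 + (1/7 : ℝ) * (hant 5 6 3).1 + (-2/7 : ℝ) * (hant 5 7 1).1 + (2/7 : ℝ) * (hant 6 2 7).2 + (-1/7 : ℝ) * (hant 6 7 2).1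
  have H5 : θ 5 = -(1/7) * ∑ j, ∑ k, ∑ l, T j k l * Phi j k l 5 := by
    have e := hT 0 1 3
    simp only [phiC2, phiC1] at e
    rw [phiC3]
    simp (config := { maxSteps := 10000000 }) only [kd, Fin.reduceEq, if_true, if_false, ite_true, ite_false, reduceIte, mul_one, mul_zero, zero_mul, one_mul, add_zero, zero_add, sub_zero, zero_sub, neg_zero, neg_neg, mul_neg, neg_mul] at e ⊢
    linear_combination (-6/7 : ℝ) * e + (-3/7 : ℝ) * (hant 0 0 5).1 + (6/7 : ℝ) * (hant 0 0 5).2 + (3/7 : ℝ) * (hant 0 1 3).1 + (2/7 : ℝ) * (hant 0 1 3).2 + (3/7 : ℝ) * (hant 0 2 4).1 + (-2/7 : ℝ) * (hant 0 2 4).2 + (-1/7 : ℝ) * (hant 0 3 1).1 + (1/7 : ℝ) * (hant 0 4 2).1 + (-3/7 : ℝ) * (hant 0 5 0).1 + (-3/7 : ℝ) * (hant 0 6 7).1 + (2/7 : ℝ) * (hant 0 6 7).2 + (-1/7 : ℝ) * (hant 0 7 6).1 + (-2/7 : ℝ) * (hant 1 0 3).2 + (-3/7 : ℝ) * (hant 1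 1 5).1 + (6/7 : ℝ) * (hant 1 1 5).2 + (3/7 : ℝ) * (hant 1 2 6).1 + (-2/7 : ℝ) * (hant 1 2 6).2 + (1/7 : ℝ) * (hant 1 3 0).1 + (3/7 : ℝ) * (hant 1 4 7).1 + (-2/7 : ℝ) * (hant 1 4 7).2 + (-3/7 : ℝ) * (hant 1 5 1).1 + (1/7 : ℝ) * (hant 1 6 2).1 + (1/7 : ℝ) * (hant 1 7 4).1 + (-4/7 : ℝ) * (hant 2 0 4).2 + (-4/7 : ℝ) * (hant 2 1 6).2 + (-3/7 : ℝ) * (hant 2 3 7).1 + (4/7 : ℝ) * (hant 2 3 7).2 + (2/7 : ℝ) * (hant 2 4 0).1 + (2/7 : ℝ) * (hant 2 6 1).1 + (-2/7 : ℝ) * (hant 2 7 3).1 + (2/7 : ℝ) * (hant 3 2 7).2 + (-3/7 : ℝ) * (hant 3 3 5).1 + (6/7 : ℝ) * (hant 3 3 5).2 + (3/7 : ℝ) * (hant 3 4 6).1 + (-2/7 : ℝ) * (hant 3 4 6).2 + (-3/7 : ℝ) * (hant 3 5 3).1 + (1/7 : ℝ) * (hant 3 6 4).1 + (-1/7 :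 ℝ) * (hant 3 7 2).1 + (-4/7 : ℝ) * (hant 4 1 7).2 + (-4/7 : ℝ) * (hant 4 3 6).2 + (2/7 : ℝ) * (hant 4 6 3).1 + (2/7 : ℝ) * (hant 4 7 1).1 + (4/7 : ℝ) * (hant 6 0 7).2 + (-2/7 : ℝ) * (hant 6 7 0).1
  have H6 : θ 6 = -(1/7) * ∑ j, ∑ k, ∑ l, T j k l * Phi j k l 6 := by
    have e := hT 0 1 4
    simp only [phiC2, phiC1] at e
    rw [phiC3]
    simp (config := { maxSteps := 10000000 }) only [kd, Fin.reduceEq, if_true, if_false, ite_true, ite_false, reduceIte, mul_one, mul_zero, zero_mul, one_mul, add_zero, zero_add, sub_zero, zero_sub, neg_zero, neg_neg, mul_neg, neg_mul] at e ⊢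
    linear_combination (6/7 : ℝ) * e + (-3/7 : ℝ) * (hant 0 0 6).1 + (6/7 : ℝ) * (hant 0 0 6).2 + (-3/7 : ℝ) * (hant 0 1 4).1 + (-2/7 : ℝ) * (hant 0 1 4).2 + (3/7 : ℝ) * (hant 0 2 3).1 + (-2/7 : ℝ) * (hant 0 2 3).2 + (1/7 : ℝ) * (hant 0 3 2).1 + (1/7 : ℝ) * (hant 0 4 1).1 + (3/7 : ℝ) * (hant 0 5 7).1 + (-2/7 : ℝ) * (hant 0 5 7).2 + (-3/7 : ℝ) * (hant 0 6 0).1 + (1/7 : ℝ) * (hant 0 7 5).1 + (2/7 : ℝ) * (hant 1 0 4).2 + (-3/7 : ℝ) * (hant 1 1 6).1 + (6/7 : ℝ) * (hant 1 1 6).2 + (-3/7 : ℝ) * (hant 1 2 5).1 + (2/7 : ℝ) * (hant 1 2 5).2 + (3/7 : ℝ) * (hant 1 3 7).1 + (-2/7 : ℝ) * (hant 1 3 7).2 + (-1/7 : ℝ) * (hant 1 4 0).1 + (-1/7 : ℝ) * (hant 1 5 2).1 + (-3/7 : ℝ) * (hant 1 6 1).1 + (1/7 : ℝ) * (hant 1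 7 3).1 + (-4/7 : ℝ) * (hant 2 0 3).2 + (4/7 : ℝ) * (hant 2 1 5).2 + (2/7 : ℝ) * (hant 2 3 0).1 + (3/7 : ℝ) * (hant 2 4 7).1 + (-4/7 : ℝ) * (hant 2 4 7).2 + (-2/7 : ℝ) * (hant 2 5 1).1 + (2/7 : ℝ) * (hant 2 7 4).1 + (-4/7 : ℝ) * (hant 3 1 7).2 + (3/7 : ℝ) * (hant 3 4 5).1 + (-4/7 : ℝ) * (hant 3 4 5).2 + (2/7 : ℝ) * (hant 3 5 4).1 + (2/7 : ℝ) * (hant 3 7 1).1 + (-2/7 : ℝ) * (hant 4 2 7).2 + (-2/7 : ℝ) * (hant 4 3 5).2 + (-3/7 : ℝ) * (hant 4 4 6).1 + (6/7 : ℝ) * (hant 4 4 6).2 + (1/7 : ℝ) * (hant 4 5 3).1 + (-3/7 : ℝ) * (hant 4 6 4).1 + (1/7 : ℝ) * (hant 4 7 2).1 + (-4/7 : ℝ) * (hant 5 0 7).2 + (2/7 : ℝ) * (hant 5 7 0).1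
  have H7 : θ 7 = -(1/7) * ∑ j, ∑ k, ∑ l, T j k l * Phi j k l 7 := by
    have e := hT 0 1 2
    simp only [phiC2, phiC1] at e
    rw [phiC3]
    simp (config := { maxSteps := 10000000 }) only [kd, Fin.reduceEq, if_true, if_false, ite_true, ite_false, reduceIte, mul_one, mul_zero, zero_mul, one_mul, add_zero, zero_add, sub_zero, zero_sub, neg_zero, neg_neg, mul_neg, neg_mul] at e ⊢
    linear_combination (-6/7 : ℝ) * e + (-3/7 : ℝ) * (hant 0 0 7).1 + (6/7 : ℝ) * (hant 0 0 7).2 + (3/7 : ℝ) * (hant 0 1 2).1 + (2/7 : ℝ) * (hant 0 1 2).2 + (-1/7 : ℝ) * (hant 0 2 1).1 + (-3/7 : ℝ) * (hant 0 3 4).1 + (2/7 : ℝ) * (hant 0 3 4).2 + (-1/7 : ℝ) * (hant 0 4 3).1 + (-3/7 : ℝ) * (hant 0 5 6).1 + (2/7 : ℝ) * (hant 0 5 6).2 + (-1/7 : ℝ) * (hant 0 6 5).1 + (-3/7 : ℝ) * (hant 0 7 0).1 + (-2/7 : ℝ) * (hant 1 0 2).2 + (-3/7 : ℝ) * (hant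 1 1 7).1 + (6/7 : ℝ) * (hant 1 1 7).2 + (1/7 : ℝ) * (hant 1 2 0).1 + (-3/7 : ℝ) * (hant 1 3 6).1 + (2/7 : ℝ) * (hant 1 3 6).2 + (-3/7 : ℝ) * (hant 1 4 5).1 + (2/7 : ℝ) * (hant 1 4 5).2 + (-1/7 : ℝ) * (hant 1 5 4).1 + (-1/7 : ℝ) * (hant 1 6 3).1 + (-3/7 : ℝ) * (hant 1 7 1).1 + (-3/7 : ℝ) * (hant 2 2 7).1 + (6/7 : ℝ) * (hant 2 2 7).2 + (-3/7 : ℝ) * (hant 2 3 5).1 + (2/7 : ℝ) * (hant 2 3 5).2 + (3/7 : ℝ) * (hant 2 4 6).1 + (-2/7 : ℝ) * (hant 2 4 6).2 + (-1/7 : ℝ) * (hant 2 5 3).1 + (1/7 : ℝ) * (hant 2 6 4).1 + (-3/7 : ℝ) * (hant 2 7 2).1 + (4/7 : ℝ) * (hant 3 0 4).2 + (4/7 : ℝ) * (hant 3 1 6).2 + (4/7 : ℝ) * (hant 3 2 5).2 + (-2/7 : ℝ) * (hant 3 4 0).1 + (-2/7 : ℝ) * (hant 3 5 2).1 + (-2/7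 : ℝ) * (hant 3 6 1).1 + (4/7 : ℝ) * (hant 4 1 5).2 + (-4/7 : ℝ) * (hant 4 2 6).2 + (-2/7 : ℝ) * (hant 4 5 1).1 + (2/7 : ℝ) * (hant 4 6 2).1 + (4/7 : ℝ) * (hant 5 0 6).2 + (-2/7 : ℝ) * (hant 5 6 0).1
  intro i
  fin_cases i
  · exact H0
  · exact H1
  · exact H2
  · exact H3
  · exact H4
  · exact H5
  · exact H6
  · exact H7
end
end
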